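/- arXiv:2506.13346 — 8 statements merged into one kernel-verified Lean document; each statement's English description precedes it below -/
import Mathlib

section
/- Let p be a prime, n ≥ 1, and R a Noetherian F-finite 𝔽_p-algebra, and let I₀ ⊆ R be an ideal. Then for every integer m ≥ 1 there exists an integer e ≥ 1 such that Fᵉ(Wₙ I₀) ⊆ (Wₙ I₀)ᵐ, i.e. for every x ∈ Wₙ(R) all of whose Witt coordinates lie in I₀, the element Fᵉ(x) lies in the m-th power of the ideal Wₙ I₀. -/
namespace TruncatedWittVector

variable {p n : ℕ} [hp : Fact p.Prime] {R S : Type*} [CommRing R] [CommRing S]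

theorem truncate_out' (x : TruncatedWittVector p n R) :
    WittVector.truncate n x.out = x :=
  TruncatedWittVector.truncateFun_out x

/-- The ring homomorphism `Wₙ(R) →+* Wₙ(S)` induced coordinatewise by `f : R →+* S`,
i.e. the truncated Witt vector functoriality map `TruncatedWittVector.map`. -/
noncomputable def map (f : R →+* S) :
    TruncatedWittVector p n R →+* TruncatedWittVector p n S :=
  RingHom.liftOfRightInverse (WittVector.truncate n) TruncatedWittVector.out
    truncate_out'
    ⟨(WittVector.truncate n).comp (WittVector.map f), by
      intro x hx
      have hx' : ∀ i < n, x.coeff i = 0 := (WittVector.mem_ker_truncate n x).mp hx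
      have h : ((WittVector.truncate n).comp (WittVector.map f)) x = 0 := by
        rw [RingHom.comp_apply, ← RingHom.mem_ker, WittVector.mem_ker_truncate]
        intro i hi
        rw [WittVector.map_coeff, hx' i hi, map_zero]
      exact RingHom.mem_ker.mpr h⟩

theorem map_apply (f : R →+* S) (x : TruncatedWittVector p n R) :
    map f x = WittVector.truncate n (WittVector.map f x.out) := by
  conv_lhs => rw [← truncate_out' x]
  exact RingHom.liftOfRightInverse_comp_apply _ _ _ _ x.out

@[simp]
theorem coeff_map (f : R →+* S) (x : TruncatedWittVector p n R) (i : Fin n) :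
    (map f x).coeff i = f (x.coeff i) := by
  rw [map_apply, WittVector.coeff_truncate, WittVector.map_coeff, coeff_out]

end TruncatedWittVector

section Aux

variable {p : ℕ} [hp : Fact p.Prime] {R : Type*} [CommRing R]

open WittVector

lemma WittAux.iter_versch_coeff_lt (x : WittVector p R) :
    ∀ (i j : ℕ), j < i → (verschiebung^[i] x).coeff j = 0 := by
  intro i
  induction i with
  | zero => intro j h; omega
  | succ i ih =>
    intro j hj
    rw [Function.iterate_succ_apply']
    cases j with
    | zero => exact verschiebung_coeff_zero _
    | succ k => rw [verschiebung_coeff_succ]; exact ih k (by omega)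

lemma WittAux.iter_versch_teich_coeff (a : R) (i j : ℕ) :
    (verschiebung^[i] (teichmuller p a)).coeff j = if j = i then a else 0 := by
  rcases lt_or_ge j i with h | h
  · rw [WittAux.iter_versch_coeff_lt _ i j h, if_neg h.ne]
  · obtain ⟨k, rfl⟩ := Nat.exists_eq_add_of_le h
    rw [add_comm i k, iterate_verschiebung_coeff]
    cases k with
    | zero => rw [teichmuller_coeff_zero, if_pos (by omega)]
    | succ k =>
      rw [teichmuller_coeff_pos _ _ _ (Nat.succ_pos k), if_neg (by omega)]

lemma WittAux.sum_coeff (a : ℕ → R) : ∀ (N j : ℕ),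
    (∑ i ∈ Finset.range N, verschiebung^[i] (teichmuller p (a i))).coeff j
      = if j < N then a j else 0 := by
  intro N
  induction N with
  | zero => intro j; simp [WittVector.zero_coeff]
  | succ N ih =>
    intro j
    rw [Finset.sum_range_succ, coeff_add_of_disjoint]
    · rw [ih j, WittAux.iter_versch_teich_coeff]
      by_cases h1 : j < N
      · rw [if_pos h1, if_neg (Nat.ne_of_lt h1), if_pos (Nat.lt_succ_of_lt h1), add_zero]
      · by_cases h2 : j = N
        · subst h2; rw [if_neg h1, if_pos rfl, if_pos (Nat.lt_succ_self _), zero_add]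
        · rw [if_neg h1, if_neg h2, if_neg (by omega), add_zero]
    · intro k
      by_cases hk : k < N
      · right; rw [WittAux.iter_versch_teich_coeff, if_neg (by omega)]
      · left; rw [ih k, if_neg hk]

variable [CharP R p]

lemma WittAux.frob_teich (a : R) :
    WittVector.frobenius (teichmuller p a) = teichmuller p (a ^ p) := by
  ext j
  rw [coeff_frobenius_charP]
  cases j with
  | zero => rfl
  | succ k =>
    rw [teichmuller_coeff_pos _ _ _ (Nat.succ_pos k),
      teichmuller_coeff_pos _ _ _ (Nat.succ_pos k), zero_pow hp.out.ne_zero]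

lemma WittAux.iter_frob_teich (a : R) (i : ℕ) :
    (⇑(WittVector.frobenius : WittVector p R →+* WittVector p R))^[i] (teichmuller p a)
      = teichmuller p (a ^ p ^ i) := by
  induction i with
  | zero => simp
  | succ i ih =>
    rw [Function.iterate_succ_apply', ih, WittAux.frob_teich, ← pow_mul, ← pow_succ]

lemma WittAux.term_mem {n : ℕ} (I₀ : Ideal R) (J : Ideal (TruncatedWittVector p n R))
    (hJ : ∀ x : TruncatedWittVector p n R, x ∈ J ↔ ∀ i : Fin n, x.coeff i ∈ I₀)
    {a : R} (ha : a ∈ I₀) {m i c E : ℕ} (hc : 1 ≤ c)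
    (hE : E = c + (m - 1) * p ^ i) (hm : 1 ≤ m) :
    WittVector.truncate n (verschiebung^[i] (teichmuller p (a ^ E))) ∈ J ^ m := by
  obtain ⟨k, rfl⟩ : ∃ k, m = k + 1 := ⟨m - 1, by omega⟩
  have hE' : a ^ E = a ^ c * (a ^ p ^ i) ^ k := by
    rw [← pow_mul, ← pow_add, hE, Nat.add_sub_cancel, mul_comm]
  have h2 : teichmuller p (a ^ E) =
      teichmuller p (a ^ c) *
        (⇑(WittVector.frobenius : WittVector p R →+* WittVector p R))^[i]
          ((teichmuller p a) ^ k) := by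
    rw [iterate_map_pow, WittAux.iter_frob_teich, ← map_pow, ← map_mul, ← hE']
  rw [h2, ← iterate_verschiebung_mul_left, map_mul, map_pow, map_pow]
  have h3 : WittVector.truncate n (verschiebung^[i] (teichmuller p a ^ c)) ∈ J := by
    rw [hJ]
    intro j
    rw [WittVector.coeff_truncate, ← map_pow, WittAux.iter_versch_teich_coeff]
    split
    · obtain ⟨d, rfl⟩ : ∃ d, c = d + 1 := ⟨c - 1, by omega⟩
      rw [pow_succ]
      exact I₀.mul_mem_left _ ha
    · exact I₀.zero_mem
  have h4 : WittVector.truncate n (teichmuller p a) ∈ J := by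
    rw [hJ]
    intro j
    rw [WittVector.coeff_truncate]
    obtain ⟨j, hj⟩ := j
    cases j with
    | zero => exact ha
    | succ j => rw [teichmuller_coeff_pos _ _ _ (Nat.succ_pos j)]; exact I₀.zero_mem
  rw [pow_succ']
  exact Ideal.mul_mem_mul h3 (Ideal.pow_mem_pow h4 k)

lemma WittAux.trunc_map_iter {n : ℕ} (e : ℕ) (X : WittVector p R) :
    (⇑(TruncatedWittVector.map (frobenius R p) :
        TruncatedWittVector p n R →+* TruncatedWittVector p n R))^[e]
      (WittVector.truncate n X) =
    WittVector.truncate n ((⇑(WittVector.map (frobenius R p) :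
        WittVector p R →+* WittVector p R))^[e] X) := by
  induction e generalizing X with
  | zero => rfl
  | succ e ih =>
    rw [Function.iterate_succ_apply, Function.iterate_succ_apply, ← ih]
    congr 1
    ext j
    rw [TruncatedWittVector.coeff_map, WittVector.coeff_truncate,
      WittVector.coeff_truncate, WittVector.map_coeff]

end Aux

/-- Let `p` be a prime, `n ≥ 1`, and `R` a Noetherian `F`-finite `𝔽_p`-algebra, and
`I₀ ⊆ R` an ideal.  For every `m ≥ 1` there is `e ≥ 1` such that the `e`-th iterate of
the Witt vector Frobenius maps the ideal `Wₙ I₀` (Witt vectors with all coordinates in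
`I₀`) into the `m`-th power `(Wₙ I₀) ^ m`. -/

theorem frobenius_pow_maps_witt_ideal_into_power (p n : ℕ) [Fact p.Prime] (hn : 1 ≤ n)
    (R : Type*) [CommRing R] [CharP R p] [IsNoetherianRing R]
    (hFfin : (frobenius R p).Finite)
    (I₀ : Ideal R) (J : Ideal (TruncatedWittVector p n R))
    (hJ : ∀ x : TruncatedWittVector p n R, x ∈ J ↔ ∀ i : Fin n, x.coeff i ∈ I₀)
    (m : ℕ) (hm : 1 ≤ m) :
    ∃ e : ℕ, 1 ≤ e ∧ ∀ x ∈ J,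
      (⇑(TruncatedWittVector.map (frobenius R p) :
          TruncatedWittVector p n R →+* TruncatedWittVector p n R))^[e] x ∈ J ^ m := by
  classical
  refine ⟨m + n, by omega, ?_⟩
  intro x hx
  have hx' : x = WittVector.truncate n x.out := (TruncatedWittVector.truncate_out' x).symm
  rw [hx', WittAux.trunc_map_iter, ← WittVector.frobenius_eq_map_frobenius]
  set X := x.out with hX
  have hsum : WittVector.truncate n
      ((⇑(WittVector.frobenius : WittVector p R →+* WittVector p R))^[m + n] X) =
      ∑ i ∈ Finset.range n, WittVector.truncate n
        (WittVector.verschiebung^[i]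
          (WittVector.teichmuller p (X.coeff i ^ p ^ (m + n)))) := by
    rw [← map_sum]
    ext j
    rw [WittVector.coeff_truncate, WittVector.coeff_truncate,
      WittVector.iterate_frobenius_coeff, WittAux.sum_coeff, if_pos j.is_lt]
  rw [hsum]
  apply Ideal.sum_mem
  intro i hi
  have hi' : i < n := Finset.mem_range.mp hi
  have ha : X.coeff i ∈ I₀ := by
    have : X.coeff i = x.coeff ⟨i, hi'⟩ := TruncatedWittVector.coeff_out x ⟨i, hi'⟩
    rw [this]
    exact (hJ x).mp hx ⟨i, hi'⟩
  have h1 : p ^ i ≤ p ^ n := Nat.pow_le_pow_right (Fact.out (p := p.Prime)).one_lt.le hi'.le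
  have h2 : m - 1 < p ^ m :=
    lt_of_le_of_lt (Nat.sub_le m 1) (Nat.lt_pow_self (Fact.out (p := p.Prime)).one_lt : m < p ^ m)
  have hap : (m - 1) * p ^ i < p ^ (m + n) := by
    calc (m - 1) * p ^ i ≤ (m - 1) * p ^ n := Nat.mul_le_mul_left _ h1
      _ < p ^ m * p ^ n :=
        mul_lt_mul_of_pos_right h2 (pow_pos (Fact.out (p := p.Prime)).pos n)
      _ = p ^ (m + n) := (pow_add p m n).symm
  have hc : 1 ≤ p ^ (m + n) - (m - 1) * p ^ i := by omega
  have hE : p ^ (m + n) = (p ^ (m + n) - (m - 1) * p ^ i) + (m - 1) * p ^ i := by omega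
  exact WittAux.term_mem I₀ J hJ ha hc hE hm
end

section
/- Let p be a prime, n ≥ 1, and R a Noetherian F-finite 𝔽_p-algebra, and let I₀ ⊆ R be an ideal. Then for every integer m ≥ 1 there exists an integer m' ≥ 1 such that Wₙ(I₀^{m'}) ⊆ (Wₙ I₀)ᵐ, i.e. every n-truncated Witt vector all of whose Witt coordinates lie in the ideal power I₀^{m'} belongs to the m-th power of the ideal Wₙ I₀. -/
open WittVector Function Pointwise

section Aux

variable {p n : ℕ} [hp : Fact p.Prime] {R : Type*} [CommRing R]

local notation "𝕎" => WittVector p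

theorem coeff_iterate_verschiebung (x : 𝕎 R) (k i : ℕ) :
    (verschiebung^[k] x).coeff i = if i < k then 0 else x.coeff (i - k) := by
  induction k generalizing i with
  | zero => simp
  | succ k ih =>
    rw [Function.iterate_succ_apply']
    cases i with
    | zero => simp
    | succ i =>
      rw [verschiebung_coeff_succ, ih]
      by_cases h : i < k
      · rw [if_pos h, if_pos (by omega)]
      · rw [if_neg h, if_neg (by omega), Nat.succ_sub_succ]

theorem iterate_verschiebung_sub (x y : 𝕎 R) (k : ℕ) :
    verschiebung^[k] (x - y) = verschiebung^[k] x - verschiebung^[k] y := by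
  induction k with
  | zero => rfl
  | succ k ih =>
    rw [iterate_succ_apply', iterate_succ_apply', iterate_succ_apply', ih, map_sub]

theorem coeff_zero_sub' (x y : 𝕎 R) : (x - y).coeff 0 = x.coeff 0 - y.coeff 0 := by
  have h : ∀ z : 𝕎 R, ghostComponent 0 z = z.coeff 0 := by
    intro z
    rw [ghostComponent_apply, wittPolynomial_zero, MvPolynomial.aeval_X]
  rw [← h, ← h, ← h, map_sub]

variable [CharP R p]

theorem frobenius_teichmuller' (a : R) :
    frobenius (teichmuller p a) = teichmuller p (a ^ p) := by
  apply WittVector.ext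
  intro i
  rw [coeff_frobenius_charP]
  cases i with
  | zero => rw [teichmuller_coeff_zero, teichmuller_coeff_zero]
  | succ i =>
    rw [teichmuller_coeff_pos p a _ (Nat.succ_pos i),
      teichmuller_coeff_pos p (a ^ p) _ (Nat.succ_pos i), zero_pow hp.out.ne_zero]

theorem iterate_frobenius_teichmuller (a : R) (k : ℕ) :
    frobenius^[k] (teichmuller p a) = teichmuller p (a ^ p ^ k) := by
  induction k with
  | zero => simp
  | succ k ih =>
    rw [iterate_succ_apply', ih, frobenius_teichmuller', ← pow_mul, ← pow_succ]

end Aux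

section Trunc

variable (p n : ℕ) [hp : Fact p.Prime] {R : Type*} [CommRing R]

local notation "𝕎" => WittVector p

/-- The truncated Witt vector with `a` in slot `k` and zero elsewhere. -/
noncomputable def ψ (k : ℕ) (a : R) : TruncatedWittVector p n R :=
  WittVector.truncate n (verschiebung^[k] (teichmuller p a))

theorem ψ_def (k : ℕ) (a : R) :
    ψ p n k a = WittVector.truncate n (verschiebung^[k] (teichmuller p a)) := rfl

theorem coeff_ψ (k : ℕ) (a : R) (i : Fin n) :
    (ψ p n k a).coeff i = if (i : ℕ) = k then a else 0 := by
  rw [ψ_def, WittVector.coeff_truncate, coeff_iterate_verschiebung]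
  by_cases h : (i : ℕ) < k
  · rw [if_pos h, if_neg (by omega)]
  · rw [if_neg h]
    by_cases h2 : (i : ℕ) = k
    · rw [if_pos h2, show (i : ℕ) - k = 0 by omega, teichmuller_coeff_zero]
    · rw [if_neg h2, teichmuller_coeff_pos p a _ (by omega)]

theorem truncate_trunc_iterate (k : ℕ) (hk1 : k + 1 ≤ n) (z : 𝕎 R) :
    TruncatedWittVector.truncate hk1 (WittVector.truncate n (verschiebung^[k] z)) =
      TruncatedWittVector.truncate hk1 (ψ p n k (z.coeff 0)) := by
  apply TruncatedWittVector.ext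
  intro i
  have hi := i.isLt
  rw [TruncatedWittVector.coeff_truncate, TruncatedWittVector.coeff_truncate,
    WittVector.coeff_truncate, coeff_iterate_verschiebung, coeff_ψ]
  simp only [Fin.coe_castLE]
  by_cases h : (i : ℕ) < k
  · rw [if_pos h, if_neg (by omega)]
  · have hik : (i : ℕ) = k := by omega
    rw [if_neg h, if_pos hik, show (i : ℕ) - k = 0 by omega]

theorem truncate_ψ_sub (k : ℕ) (hk1 : k + 1 ≤ n) (a b : R) :
    TruncatedWittVector.truncate hk1 (ψ p n k a) - TruncatedWittVector.truncate hk1 (ψ p n k b) =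
      TruncatedWittVector.truncate hk1 (ψ p n k (a - b)) := by
  rw [← map_sub]
  have h1 : ψ p n k a - ψ p n k b =
      WittVector.truncate n (verschiebung^[k] (teichmuller p a - teichmuller p b)) := by
    rw [iterate_verschiebung_sub, map_sub, ψ_def, ψ_def]
  rw [h1, truncate_trunc_iterate, coeff_zero_sub', teichmuller_coeff_zero,
    teichmuller_coeff_zero]

variable [CharP R p]

theorem ψ_mul_pow (k : ℕ) (b c₁ : R) :
    ψ p n k (b * c₁ ^ p ^ k) =
      ψ p n k b * WittVector.truncate n (teichmuller p c₁) := by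
  rw [ψ_def, ψ_def, ← map_mul]
  congr 1
  rw [iterate_verschiebung_mul_left, iterate_frobenius_teichmuller, ← map_mul]

theorem coeff_sub_mem (K : Ideal R) (x y : TruncatedWittVector p n R)
    (hx : ∀ i, x.coeff i ∈ K) (hy : ∀ i, y.coeff i ∈ K) (i : Fin n) :
    (x - y).coeff i ∈ K := by
  classical
  have hout_coeff : ∀ (z : TruncatedWittVector p n R) (j : ℕ),
      z.out.coeff j = if h : j < n then z.coeff ⟨j, h⟩ else 0 := fun z j => rfl
  have hout : ∀ (z : TruncatedWittVector p n R), (∀ j, z.coeff j ∈ K) →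
      WittVector.map (Ideal.Quotient.mk K) z.out = 0 := by
    intro z hz
    apply WittVector.ext
    intro j
    rw [WittVector.map_coeff, WittVector.zero_coeff, Ideal.Quotient.eq_zero_iff_mem,
      hout_coeff]
    split_ifs with h
    · exact hz _
    · exact K.zero_mem
  have h1 : x - y = WittVector.truncate n (x.out - y.out) := by
    rw [map_sub]
    congr 1 <;>
      · apply TruncatedWittVector.ext
        intro i
        rw [WittVector.coeff_truncate, TruncatedWittVector.coeff_out]
  have h2 : WittVector.map (Ideal.Quotient.mk K) (x.out - y.out) = 0 := by
    rw [map_sub, hout x hx, hout y hy, sub_zero]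
  have h3 : (Ideal.Quotient.mk K) ((x.out - y.out).coeff i) = 0 := by
    rw [← WittVector.map_coeff, h2, WittVector.zero_coeff]
  rw [h1, WittVector.coeff_truncate]
  exact Ideal.Quotient.eq_zero_iff_mem.1 h3

theorem coeff_eq_of_truncate_eq {k : ℕ} (hk1 : k + 1 ≤ n)
    (y z : TruncatedWittVector p n R)
    (h : TruncatedWittVector.truncate hk1 y = TruncatedWittVector.truncate hk1 z)
    (i : Fin n) (hi : (i : ℕ) < k + 1) : y.coeff i = z.coeff i := by
  have h2 := congrArg (TruncatedWittVector.coeff ⟨(i : ℕ), hi⟩) h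
  rw [TruncatedWittVector.coeff_truncate, TruncatedWittVector.coeff_truncate] at h2
  have hc : Fin.castLE hk1 ⟨(i : ℕ), hi⟩ = i := Fin.ext rfl
  rwa [hc] at h2

theorem truncate_eq_ψ (k : ℕ) (hk : k < n) (hk1 : k + 1 ≤ n)
    (x : TruncatedWittVector p n R)
    (h0 : ∀ i : Fin n, (i : ℕ) < k → x.coeff i = 0) :
    TruncatedWittVector.truncate hk1 x =
      TruncatedWittVector.truncate hk1 (ψ p n k (x.coeff ⟨k, hk⟩)) := by
  apply TruncatedWittVector.ext
  intro i
  have hi := i.isLt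
  rw [TruncatedWittVector.coeff_truncate, TruncatedWittVector.coeff_truncate, coeff_ψ]
  simp only [Fin.coe_castLE]
  by_cases h : (i : ℕ) < k
  · rw [if_neg (by omega), h0 _ (by simpa using h)]
  · have hik : (i : ℕ) = k := by omega
    rw [if_pos hik]
    congr 1
    exact Fin.ext hik

end Trunc

section Pigeon

variable {R : Type*} [CommRing R]

theorem exists_pow_factor (I : Ideal R) (s : Finset R)
    (hs : (↑s : Set R) ⊆ (I : Set R)) (q : ℕ) (hq : 1 ≤ q) (D : ℕ)
    (hD : s.card * (q - 1) < D)
    (x : R) (hx : x ∈ (↑s : Set R) ^ D) :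
    ∃ c ∈ I, ∃ b ∈ I ^ (D - q), q ≤ D ∧ x = b * c ^ q := by
  classical
  obtain ⟨f, hf⟩ := Set.mem_pow.1 hx
  have hprod : ∏ i : Fin D, (f i : R) = x := by rw [← List.prod_ofFn]; exact hf
  obtain ⟨c, hcs, hcard⟩ := Finset.exists_lt_card_fiber_of_mul_lt_card_of_maps_to
    (f := fun i : Fin D => (f i : R)) (s := Finset.univ) (t := s) (n := q - 1)
    (fun i _ => (f i).2) (by simpa using hD)
  set t := Finset.univ.filter (fun i : Fin D => (f i : R) = c) with ht_def
  have hqt : q ≤ t.card := by omega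
  have htD : t.card ≤ D := by
    have := Finset.card_filter_le Finset.univ (fun i : Fin D => (f i : R) = c)
    simpa using this
  have hsplit : (∏ i ∈ t, (f i : R)) * (∏ i ∈ Finset.univ.filter
      (fun i : Fin D => ¬((f i : R) = c)), (f i : R)) = x := by
    rw [ht_def, Finset.prod_filter_mul_prod_filter_not]
    exact hprod
  have hconst : (∏ i ∈ t, (f i : R)) = c ^ t.card := by
    rw [Finset.prod_congr rfl (fun i hi => (Finset.mem_filter.1 hi).2),
      Finset.prod_const]
  set rest := ∏ i ∈ Finset.univ.filter (fun i : Fin D => ¬((f i : R) = c)), (f i : R)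
    with hrest_def
  have hrest : rest ∈ I ^ (D - t.card) := by
    have h1 : rest ∈ ∏ _i ∈ Finset.univ.filter (fun i : Fin D => ¬((f i : R) = c)), I :=
      Ideal.prod_mem_prod (fun i _ => hs (f i).2)
    rw [Finset.prod_const] at h1
    have h2 : (Finset.univ.filter (fun i : Fin D => ¬((f i : R) = c))).card = D - t.card := by
      rw [Finset.filter_not, Finset.card_sdiff_of_subset (Finset.filter_subset _ _)]
      simp [ht_def]
    rwa [h2] at h1
  refine ⟨c, hs hcs, c ^ (t.card - q) * rest, ?_, by omega, ?_⟩
  · have h1 : c ^ (t.card - q) * rest ∈ I ^ (t.card - q) * I ^ (D - t.card) :=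
      Ideal.mul_mem_mul (Ideal.pow_mem_pow (hs hcs) _) hrest
    rwa [← pow_add, show t.card - q + (D - t.card) = D - q by omega] at h1
  · rw [← hsplit, hconst,
      show c ^ t.card = c ^ (t.card - q) * c ^ q by rw [← pow_add]; congr 1; omega]
    ring

end Pigeon

/-- Let `p` be a prime, `n ≥ 1`, and `R` a Noetherian `F`-finite `𝔽_p`-algebra, and
`I₀ ⊆ R` an ideal.  For every `m ≥ 1` there is `m' ≥ 1` such that every truncated Witt
vector all of whose coordinates lie in `I₀ ^ m'` lies in the `m`-th power of the ideal
`Wₙ I₀` of Witt vectors with all coordinates in `I₀`. -/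
theorem witt_ideal_power_inclusion (p n : ℕ) [Fact p.Prime] (hn : 1 ≤ n)
    (R : Type*) [CommRing R] [CharP R p] [IsNoetherianRing R]
    (hFfin : (frobenius R p).Finite)
    (I₀ : Ideal R) (J : Ideal (TruncatedWittVector p n R))
    (hJ : ∀ x : TruncatedWittVector p n R, x ∈ J ↔ ∀ i : Fin n, x.coeff i ∈ I₀)
    (m : ℕ) (hm : 1 ≤ m) :
    ∃ m' : ℕ, 1 ≤ m' ∧
      ∀ x : TruncatedWittVector p n R, (∀ i : Fin n, x.coeff i ∈ I₀ ^ m') → x ∈ J ^ m := by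
  classical
  clear hm hn hFfin
  induction m with
  | zero =>
    exact ⟨1, le_refl 1, fun x _ => by simp [Ideal.one_eq_top]⟩
  | succ M ih =>
    obtain ⟨m', hm'1, hm'⟩ := ih
    obtain ⟨s, hs⟩ := IsNoetherian.noetherian I₀
    have hssub : (↑s : Set R) ⊆ (I₀ : Set R) := by
      rw [← hs]; exact Submodule.subset_span
    set q := p ^ (n - 1) with hq_def
    have hq : 1 ≤ q := Nat.one_le_pow _ _ (Fact.out (p := p.Prime)).pos
    set D := s.card * (q - 1) + 1 with hD_def
    set m'' := m' + D + q with hm''_def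
    refine ⟨m'', by omega, ?_⟩
    set Ipow := I₀ ^ m'' with hIpow_def
    set S' : Set R := {y | ∃ b ∈ I₀ ^ (m' + D), ∃ c ∈ I₀, y = b * c ^ q} with hS'_def
    have hS'sub : S' ⊆ (Ipow : Set R) := by
      rintro y ⟨b, hb, c, hc, rfl⟩
      have h1 : I₀ ^ (m' + D) * I₀ ^ q = Ipow := by
        rw [← pow_add, hIpow_def, hm''_def]
      rw [← h1]
      exact Ideal.mul_mem_mul hb (Ideal.pow_mem_pow hc q)
    -- Ipow is contained in the span of S'
    have claim_span : Ipow ≤ Ideal.span S' := by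
      intro x hx
      have hx' : x ∈ I₀ ^ D * I₀ ^ (m' + q) := by
        rw [← pow_add, show D + (m' + q) = m'' by omega]
        exact hx
      refine Submodule.mul_induction_on hx' (fun r hr z hz => ?_)
        (fun a b ha hb => Ideal.add_mem _ ha hb)
      have hrs : r ∈ Ideal.span ((↑s : Set R) ^ D) := by
        rw [Ideal.span, ← Submodule.span_pow, hs]
        exact hr
      revert z hz
      refine Submodule.span_induction
        (p := fun r _ => ∀ z ∈ I₀ ^ (m' + q), r * z ∈ Ideal.span S')
        (fun r hrmem z hz => ?_) (fun z _ => by rw [zero_mul]; exact Ideal.zero_mem _)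
        (fun a b _ _ pa pb z hz => by
          rw [add_mul]; exact Ideal.add_mem _ (pa z hz) (pb z hz))
        (fun a r _ pr z hz => by
          rw [smul_mul_assoc]; exact Submodule.smul_mem _ _ (pr z hz)) hrs
      obtain ⟨c, hc, b, hb, hqD, rfl⟩ :=
        exists_pow_factor I₀ s hssub q hq D (by omega) r hrmem
      refine Ideal.subset_span ⟨b * z, ?_, c, hc, by ring⟩
      have h1 : b * z ∈ I₀ ^ (D - q) * I₀ ^ (m' + q) := Ideal.mul_mem_mul hb hz
      rwa [← pow_add, show D - q + (m' + q) = m' + D by omega] at h1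
    have claim_closure : ∀ a ∈ Ipow, a ∈ AddSubmonoid.closure S' := by
      intro a ha
      obtain ⟨cf, hsupp, hsum⟩ := Submodule.mem_span_set.1 (claim_span ha)
      rw [← hsum, Finsupp.sum]
      refine sum_mem (fun mi hmi => ?_)
      obtain ⟨b, hb, c, hc, hmi_eq⟩ := hsupp hmi
      refine AddSubmonoid.subset_closure ⟨cf mi * b, Ideal.mul_mem_left _ _ hb, c, hc, ?_⟩
      rw [smul_eq_mul, hmi_eq, mul_assoc]
    have hclos_le : ∀ a ∈ AddSubmonoid.closure S', a ∈ Ipow := by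
      intro a ha
      have : AddSubmonoid.closure S' ≤ Ipow.toAddSubmonoid :=
        AddSubmonoid.closure_le.2 hS'sub
      exact this ha
    -- the key downward induction on coordinates
    have key : ∀ j : ℕ, ∀ x : TruncatedWittVector p n R,
        (∀ i : Fin n, x.coeff i ∈ Ipow) →
        (∀ i : Fin n, (i : ℕ) + j < n → x.coeff i = 0) → x ∈ J ^ (M + 1) := by
      intro j
      induction j with
      | zero =>
        intro x _ hx0
        have hx : x = 0 := TruncatedWittVector.ext fun i => by
          rw [hx0 i (by have := i.isLt; omega), TruncatedWittVector.coeff_zero]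
        rw [hx]
        exact zero_mem _
      | succ j ihj =>
        intro x hxI hx0
        by_cases hjn : n ≤ j
        · exact ihj x hxI (fun i hi => absurd hi (by omega))
        · set k := n - j - 1 with hk_def
          have hk : k < n := by omega
          have hk1 : k + 1 ≤ n := hk
          have hxk : x.coeff ⟨k, hk⟩ ∈ AddSubmonoid.closure S' :=
            claim_closure _ (hxI _)
          refine AddSubmonoid.closure_induction
            (motive := fun a _ => ∀ y : TruncatedWittVector p n R,
              (∀ i, y.coeff i ∈ Ipow) →
              (∀ i : Fin n, (i : ℕ) < k → y.coeff i = 0) →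
              y.coeff ⟨k, hk⟩ = a → y ∈ J ^ (M + 1))
            ?_ ?_ ?_ hxk x hxI
            (fun i hi => hx0 i (by omega)) rfl
          -- mem case
          · rintro a ⟨b, hb, c, hc, rfl⟩ y hyI hy0 hyk
            have hbm' : b ∈ I₀ ^ m' := Ideal.pow_le_pow_right (by omega) hb
            set c₁ := c ^ p ^ (n - 1 - k) with hc₁_def
            have hcq : b * c ^ q = b * c₁ ^ p ^ k := by
              rw [hc₁_def, ← pow_mul, ← pow_add, show n - 1 - k + k = n - 1 by omega,
                ← hq_def]
            have hψb : ψ p n k b ∈ J ^ M := by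
              refine hm' _ (fun i => ?_)
              rw [coeff_ψ]
              split_ifs
              · exact hbm'
              · exact zero_mem _
            have hteich : WittVector.truncate n (teichmuller p c₁) ∈ J := by
              refine (hJ _).2 (fun i => ?_)
              rw [WittVector.coeff_truncate]
              rcases Nat.eq_zero_or_pos (i : ℕ) with h | h
              · rw [h, teichmuller_coeff_zero, hc₁_def]
                exact Ideal.pow_mem_of_mem _ hc _ (Nat.pow_pos
                  (Fact.out (p := p.Prime)).pos)
              · rw [teichmuller_coeff_pos p c₁ _ h]
                exact zero_mem _
            have huJ : ψ p n k (b * c ^ q) ∈ J ^ (M + 1) := by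
              rw [hcq, ψ_mul_pow, pow_succ]
              exact Ideal.mul_mem_mul hψb hteich
            have huI : ∀ i, (ψ p n k (b * c ^ q)).coeff i ∈ Ipow := by
              intro i
              rw [coeff_ψ]
              split_ifs
              · exact hS'sub ⟨b, hb, c, hc, rfl⟩
              · exact zero_mem _
            have hyuI : ∀ i, (y - ψ p n k (b * c ^ q)).coeff i ∈ Ipow :=
              coeff_sub_mem p n Ipow y _ hyI huI
            have htr0 : TruncatedWittVector.truncate hk1 (y - ψ p n k (b * c ^ q)) = 0 := by
              rw [map_sub, truncate_eq_ψ p n k hk hk1 y hy0, hyk, sub_self]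
            have hyu0 : ∀ i : Fin n, (i : ℕ) + j < n →
                (y - ψ p n k (b * c ^ q)).coeff i = 0 := by
              intro i hi
              rw [coeff_eq_of_truncate_eq p n hk1 _ 0 (by rw [htr0, map_zero]) i (by omega),
                TruncatedWittVector.coeff_zero]
            have h2 := ihj _ hyuI hyu0
            have h3 : y = ψ p n k (b * c ^ q) + (y - ψ p n k (b * c ^ q)) := by ring
            rw [h3]
            exact add_mem huJ h2
          -- zero case
          · intro y hyI hy0 hyk
            refine ihj y hyI (fun i hi => ?_)
            by_cases h : (i : ℕ) < k
            · exact hy0 i h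
            · have : i = ⟨k, hk⟩ := Fin.ext (by show (i : ℕ) = k; omega)
              rw [this, hyk]
          -- add case
          · intro a b ha hb pa pb y hyI hy0 hyk
            have haI : a ∈ Ipow := hclos_le a ha
            have hwI : ∀ i, (ψ p n k a).coeff i ∈ Ipow := by
              intro i
              rw [coeff_ψ]
              split_ifs
              · exact haI
              · exact zero_mem _
            have hw0 : ∀ i : Fin n, (i : ℕ) < k → (ψ p n k a).coeff i = 0 := fun i hi => by
              rw [coeff_ψ, if_neg (by omega)]
            have hwk : (ψ p n k a).coeff ⟨k, hk⟩ = a := by rw [coeff_ψ, if_pos rfl]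
            have hwJ : ψ p n k a ∈ J ^ (M + 1) := pa _ hwI hw0 hwk
            have htr : TruncatedWittVector.truncate hk1 (y - ψ p n k a) =
                TruncatedWittVector.truncate hk1 (ψ p n k b) := by
              rw [map_sub, truncate_eq_ψ p n k hk hk1 y hy0, hyk, truncate_ψ_sub,
                add_sub_cancel_left]
            have hywI : ∀ i, (y - ψ p n k a).coeff i ∈ Ipow :=
              coeff_sub_mem p n Ipow y _ hyI hwI
            have hyw0 : ∀ i : Fin n, (i : ℕ) < k → (y - ψ p n k a).coeff i = 0 := by
              intro i hi
              rw [coeff_eq_of_truncate_eq p n hk1 _ _ htr i (by omega), coeff_ψ,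
                if_neg (by omega)]
            have hywk : (y - ψ p n k a).coeff ⟨k, hk⟩ = b := by
              rw [coeff_eq_of_truncate_eq p n hk1 _ _ htr _ (by show k < k + 1; omega),
                coeff_ψ, if_pos rfl]
            have h2 : y - ψ p n k a ∈ J ^ (M + 1) := pb _ hywI hyw0 hywk
            have h3 : y = ψ p n k a + (y - ψ p n k a) := by ring
            rw [h3]
            exact add_mem hwJ h2
    intro x hx
    exact key n x hx (fun i hi => absurd hi (by omega))
end

section
/- Let p be a prime, n ≥ 1, and R a Noetherian F-finite 𝔽_p-algebra. Then the ring Wₙ(R) of n-truncated p-typical Witt vectors is Noetherian. -/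
open Function

/-- Transfer Noetherianity of a module along a surjective ring hom compatible with the
scalar actions. -/
theorem TWVaux.isNoetherian_of_surj {A S M : Type*} [Ring A] [Ring S] [AddCommGroup M]
    [Module A M] [Module S M] (g : A →+* S) (hg : Surjective g)
    (hsmul : ∀ (a : A) (m : M), a • m = g a • m) (h : IsNoetherian S M) :
    IsNoetherian A M := by
  let e : Submodule A M ↪o Submodule S M :=
    { toFun := fun N =>
        { carrier := N
          add_mem' := fun h1 h2 => N.add_mem h1 h2
          zero_mem' := N.zero_mem
          smul_mem' := by
            intro s m hm
            obtain ⟨a, rfl⟩ := hg s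
            rw [← hsmul]
            exact N.smul_mem a hm }
      inj' := by
        intro N1 N2 hh
        ext x
        exact SetLike.ext_iff.mp hh x
      map_rel_iff' := Iff.rfl }
  exact isNoetherian_mk ⟨e.dual.wellFounded h.wf⟩

/-- If `f : R →+* R` is a finite ring hom, then `R` is a finite module over the range of `f`. -/
theorem TWVaux.finite_range {R : Type*} [CommRing R] (f : R →+* R) (hf : f.Finite) :
    Module.Finite f.range R := by
  have key : ∃ s : Finset R, ∀ x : R, ∃ c : R → R, (∑ i ∈ s, f (c i) * i) = x := by
    unfold RingHom.Finite at hf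
    letI : Algebra R R := f.toAlgebra
    letI : Module R R := Algebra.toModule
    obtain ⟨s, hs⟩ := hf.fg_top
    refine ⟨s, fun x => ?_⟩
    have hx : x ∈ Submodule.span R (s : Set R) := hs ▸ Submodule.mem_top
    rw [Submodule.mem_span_finset] at hx
    obtain ⟨c, hc⟩ := hx
    refine ⟨c, ?_⟩
    rw [← hc.2]
    refine Finset.sum_congr rfl fun i _ => ?_
    rw [Algebra.smul_def, RingHom.algebraMap_toAlgebra]
  obtain ⟨s, hs⟩ := key
  constructor
  refine ⟨s, ?_⟩
  rw [eq_top_iff]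
  intro x _
  obtain ⟨c, hc⟩ := hs x
  rw [← hc]
  refine Submodule.sum_mem _ fun i hi => ?_
  have := Submodule.smul_mem (Submodule.span f.range (s : Set R))
    (⟨f (c i), ⟨c i, rfl⟩⟩ : f.range) (Submodule.subset_span hi)
  exact this

theorem TWVaux.iterV_coeff_lt {p : ℕ} [hp : Fact p.Prime] {R : Type*} [CommRing R]
    (x : WittVector p R) (k i : ℕ) (h : i < k) :
    (WittVector.verschiebung^[k] x).coeff i = 0 := by
  induction k generalizing i with
  | zero => omega
  | succ k ih =>
    rw [Function.iterate_succ_apply']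
    match i with
    | 0 => exact WittVector.verschiebung_coeff_zero _
    | (i + 1) =>
      rw [WittVector.verschiebung_coeff_succ]
      exact ih i (by omega)

/-- The first coefficient of a truncated Witt vector, as a ring hom. -/
noncomputable def TWVaux.c0 (p : ℕ) [hp : Fact p.Prime] (R : Type*) [CommRing R]
    (m : ℕ) (hm : 0 < m) : TruncatedWittVector p m R →+* R where
  toFun := TruncatedWittVector.coeff ⟨0, hm⟩
  map_zero' := by
    show TruncatedWittVector.coeff ⟨0, hm⟩ (0 : TruncatedWittVector p m R) = 0
    rw [show (0 : TruncatedWittVector p m R) = WittVector.truncate m 0 from (map_zero _).symm,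
      WittVector.coeff_truncate]
    exact WittVector.zero_coeff p R _
  map_one' := by
    show TruncatedWittVector.coeff ⟨0, hm⟩ (1 : TruncatedWittVector p m R) = 1
    rw [show (1 : TruncatedWittVector p m R) = WittVector.truncate m 1 from (map_one _).symm,
      WittVector.coeff_truncate]
    exact WittVector.one_coeff_zero p R
  map_add' x y := by
    obtain ⟨z, rfl⟩ := WittVector.truncate_surjective p m R x
    obtain ⟨w, rfl⟩ := WittVector.truncate_surjective p m R y
    show TruncatedWittVector.coeff ⟨0, hm⟩ (WittVector.truncate m z + WittVector.truncate m w) =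
      TruncatedWittVector.coeff ⟨0, hm⟩ (WittVector.truncate m z) +
        TruncatedWittVector.coeff ⟨0, hm⟩ (WittVector.truncate m w)
    rw [← map_add, WittVector.coeff_truncate, WittVector.coeff_truncate,
      WittVector.coeff_truncate]
    exact WittVector.add_coeff_zero z w
  map_mul' x y := by
    obtain ⟨z, rfl⟩ := WittVector.truncate_surjective p m R x
    obtain ⟨w, rfl⟩ := WittVector.truncate_surjective p m R y
    show TruncatedWittVector.coeff ⟨0, hm⟩ (WittVector.truncate m z * WittVector.truncate m w) =
      TruncatedWittVector.coeff ⟨0, hm⟩ (WittVector.truncate m z) *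
        TruncatedWittVector.coeff ⟨0, hm⟩ (WittVector.truncate m w)
    rw [← map_mul, WittVector.coeff_truncate, WittVector.coeff_truncate,
      WittVector.coeff_truncate]
    exact WittVector.mul_coeff_zero z w

theorem TWVaux.c0_surjective (p : ℕ) [hp : Fact p.Prime] (R : Type*) [CommRing R]
    (m : ℕ) (hm : 0 < m) : Surjective (TWVaux.c0 p R m hm) := by
  intro r
  refine ⟨TruncatedWittVector.mk p (fun i => if (i : ℕ) = 0 then r else 0), ?_⟩
  show TruncatedWittVector.coeff ⟨0, hm⟩
    (TruncatedWittVector.mk p (fun i => if (i : ℕ) = 0 then r else 0)) = r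
  rw [TruncatedWittVector.coeff_mk]
  simp

theorem TWVaux.iterFrobenius_finite (p : ℕ) [hp : Fact p.Prime] (R : Type*) [CommRing R]
    [CharP R p] (hFfin : (frobenius R p).Finite) (k : ℕ) :
    (iterateFrobenius R p k).Finite := by
  induction k with
  | zero =>
    rw [iterateFrobenius_zero]
    exact RingHom.Finite.id R
  | succ k ih =>
    have h1 : iterateFrobenius R p (k + 1) = (iterateFrobenius R p k).comp (iterateFrobenius R p 1) :=
      iterateFrobenius_add R p k 1
    rw [h1, iterateFrobenius_one]
    exact RingHom.Finite.comp ih hFfin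

/-- The inductive step. -/
theorem TWVaux.step (p n : ℕ) [hp : Fact p.Prime] (R : Type*) [CommRing R] [CharP R p]
    [IsNoetherianRing R] (hFfin : (frobenius R p).Finite)
    (IH : IsNoetherianRing (TruncatedWittVector p n R)) :
    IsNoetherianRing (TruncatedWittVector p (n + 1) R) := by
  classical
  set A := TruncatedWittVector p (n + 1) R with hA
  set B := TruncatedWittVector p n R with hB
  let π : A →+* B := TruncatedWittVector.truncate (Nat.le_succ n)
  have hπ : Surjective π := TruncatedWittVector.truncate_surjective (Nat.le_succ n)
  let fN : R →+* R := iterateFrobenius R p n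
  have hfN : fN.Finite := TWVaux.iterFrobenius_finite p R hFfin n
  let c0 : A →+* R := TWVaux.c0 p R (n + 1) (Nat.succ_pos n)
  have hc0 : Surjective c0 := TWVaux.c0_surjective p R (n + 1) (Nat.succ_pos n)
  let g : A →+* fN.range := fN.rangeRestrict.comp c0
  have hg : Surjective g := (fN.rangeRestrict_surjective).comp hc0
  haveI hNS' : IsNoetherianRing fN.range :=
    isNoetherianRing_of_surjective R _ fN.rangeRestrict fN.rangeRestrict_surjective
  haveI hMF : Module.Finite fN.range R := TWVaux.finite_range fN hfN
  haveI hNSR : IsNoetherian (↥fN.range) R := isNoetherian_of_isNoetherianRing_of_finite _ _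
  letI instMAR : Module A R := Module.compHom R g
  haveI hNAR : IsNoetherian A R :=
    TWVaux.isNoetherian_of_surj g hg (fun a m => rfl) hNSR
  -- the map realizing `R` as the kernel of `π`
  let ψ : R → A := fun r => TruncatedWittVector.mk p (fun i => if (i : ℕ) = n then r else 0)
  have hrep : ∀ r : R, ψ r = WittVector.truncate (n + 1)
      (WittVector.verschiebung^[n] (WittVector.mk p (fun j => if j = 0 then r else 0))) := by
    intro r
    apply TruncatedWittVector.ext
    intro i
    rw [WittVector.coeff_truncate, TruncatedWittVector.coeff_mk]
    rcases eq_or_lt_of_le (Nat.lt_succ_iff.mp i.is_lt) with hi | hi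
    · rw [if_pos hi]
      have : (i : ℕ) = 0 + n := by omega
      rw [this, WittVector.iterate_verschiebung_coeff, WittVector.coeff_mk]
      simp
    · rw [if_neg (by omega), TWVaux.iterV_coeff_lt _ _ _ hi]
  have hψcoeff : ∀ r : R, (ψ r).coeff ⟨n, Nat.lt_succ_self n⟩ = r := by
    intro r
    rw [TruncatedWittVector.coeff_mk]
    simp
  have hψadd : ∀ r s : R, ψ r + ψ s = ψ (r + s) := by
    intro r s
    rw [hrep, hrep, ← map_add, ← iterate_map_add]
    apply TruncatedWittVector.ext
    intro i
    rw [WittVector.coeff_truncate, TruncatedWittVector.coeff_mk]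
    rcases eq_or_lt_of_le (Nat.lt_succ_iff.mp i.is_lt) with hi | hi
    · rw [if_pos hi]
      have h0 : (i : ℕ) = 0 + n := by omega
      rw [h0, WittVector.iterate_verschiebung_coeff, WittVector.add_coeff_zero,
        WittVector.coeff_mk, WittVector.coeff_mk]
      simp
    · rw [if_neg (by omega), TWVaux.iterV_coeff_lt _ _ _ hi]
  have hψmul : ∀ (a : A) (r : R), a * ψ r = ψ ((c0 a) ^ p ^ n * r) := by
    intro a r
    obtain ⟨z, rfl⟩ := WittVector.truncate_surjective p (n + 1) R a
    rw [hrep, ← map_mul]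
    have hz : (z * WittVector.verschiebung^[n] (WittVector.mk p (fun j => if j = 0 then r else 0)))
        = WittVector.verschiebung^[n]
          ((WittVector.mk p (fun j => if j = 0 then r else 0)) * WittVector.frobenius^[n] z) := by
      rw [mul_comm, WittVector.iterate_verschiebung_mul_left]
    rw [hz]
    apply TruncatedWittVector.ext
    intro i
    rw [WittVector.coeff_truncate, TruncatedWittVector.coeff_mk]
    rcases eq_or_lt_of_le (Nat.lt_succ_iff.mp i.is_lt) with hi | hi
    · rw [if_pos hi]
      have h0 : (i : ℕ) = 0 + n := by omega
      rw [h0, WittVector.iterate_verschiebung_coeff, WittVector.mul_coeff_zero,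
        WittVector.iterate_frobenius_coeff, WittVector.coeff_mk]
      have hc : c0 (WittVector.truncate (n + 1) z) = z.coeff 0 := by
        show (WittVector.truncate (n + 1) z).coeff ⟨0, Nat.succ_pos n⟩ = z.coeff 0
        rw [WittVector.coeff_truncate]
      rw [hc]
      simp [mul_comm]
    · rw [if_neg (by omega), TWVaux.iterV_coeff_lt _ _ _ hi]
  have hψker : ∀ r : R, π (ψ r) = 0 := by
    intro r
    apply TruncatedWittVector.ext
    intro i
    rw [TruncatedWittVector.coeff_truncate, TruncatedWittVector.coeff_mk,
      TruncatedWittVector.coeff_zero]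
    have : ((Fin.castLE (Nat.le_succ n) i : Fin (n + 1)) : ℕ) = (i : ℕ) := rfl
    rw [this, if_neg (by omega)]
  have hker : ∀ k : A, π k = 0 → k = ψ (k.coeff ⟨n, Nat.lt_succ_self n⟩) := by
    intro k hk
    apply TruncatedWittVector.ext
    intro i
    rw [TruncatedWittVector.coeff_mk]
    rcases eq_or_lt_of_le (Nat.lt_succ_iff.mp i.is_lt) with hi | hi
    · rw [if_pos hi]
      congr 1
      exact Fin.ext hi
    · rw [if_neg (by omega)]
      have hthis := congrArg (fun b : B => b.coeff ⟨(i : ℕ), hi⟩) hk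
      simp only [TruncatedWittVector.coeff_zero] at hthis
      rw [show π k = TruncatedWittVector.truncate (Nat.le_succ n) k from rfl,
        TruncatedWittVector.coeff_truncate] at hthis
      have hcast : (Fin.castLE (Nat.le_succ n) ⟨(i : ℕ), hi⟩ : Fin (n + 1)) = i :=
        Fin.ext rfl
      rwa [hcast] at hthis
  -- the kernel of π as an ideal
  let K : Ideal A := RingHom.ker π
  let e : R ≃ₗ[A] K :=
    { toFun := fun r => ⟨ψ r, RingHom.mem_ker.mpr (hψker r)⟩
      map_add' := fun r s => Subtype.ext (hψadd r s).symm
      map_smul' := fun a r => by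
        apply Subtype.ext
        show ψ (a • r) = a * ψ r
        have hsm : a • r = (c0 a) ^ p ^ n * r := rfl
        rw [hsm, hψmul]
      invFun := fun k => (k : A).coeff ⟨n, Nat.lt_succ_self n⟩
      left_inv := fun r => hψcoeff r
      right_inv := fun k => Subtype.ext (hker (k : A) (RingHom.mem_ker.mp k.2)).symm }
  haveI hNK : IsNoetherian A K := isNoetherian_of_linearEquiv e
  -- B as an A-module
  letI instMAB : Module A B := Module.compHom B π
  haveI hNB : IsNoetherian A B := by
    refine TWVaux.isNoetherian_of_surj π hπ (fun a m => rfl) ?_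
    exact IH
  let πₗ : A →ₗ[A] B :=
    { toFun := π
      map_add' := map_add π
      map_smul' := fun a b => map_mul π a b }
  have hrk : LinearMap.range (K.subtype) = LinearMap.ker πₗ := by
    rw [Submodule.range_subtype]
    ext x
    exact Iff.rfl
  exact isNoetherian_of_range_eq_ker (K.subtype) πₗ hrk

/-- Let `p` be a prime, `n ≥ 1`, and `R` a Noetherian `F`-finite `𝔽_p`-algebra.
Then `Wₙ(R)` is a Noetherian ring. -/
theorem truncatedWittVector_isNoetherianRing (p n : ℕ) [Fact p.Prime] (hn : 1 ≤ n)
    (R : Type*) [CommRing R] [CharP R p] [IsNoetherianRing R]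
    (hFfin : (frobenius R p).Finite) :
    IsNoetherianRing (TruncatedWittVector p n R) := by
  clear hn
  induction n with
  | zero =>
    haveI : Subsingleton (TruncatedWittVector p 0 R) :=
      ⟨fun a b => TruncatedWittVector.ext (fun i => i.elim0)⟩
    exact isNoetherian_of_subsingleton _ _
  | succ n IH => exact TWVaux.step p n R hFfin IH
end

section
/- Let p be a prime, n ≥ 1, and let f : A → B be a finite ring homomorphism between Noetherian F-finite 𝔽_p-algebras. Then the induced ring homomorphism Wₙ(f) : Wₙ(A) → Wₙ(B) on n-truncated p-typical Witt vectors is finite. -/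
section Aux

variable {p : ℕ} [hp : Fact p.Prime] {R S : Type*} [CommRing R] [CommRing S]

lemma WVaux.iterate_verschiebung_coeff_lt (x : WittVector p R) {i j : ℕ} (hj : j < i) :
    (WittVector.verschiebung^[i] x).coeff j = 0 := by
  induction i generalizing j with
  | zero => omega
  | succ i ih =>
    rw [Function.iterate_succ_apply']
    cases j with
    | zero => exact WittVector.verschiebung_coeff_zero _
    | succ j => rw [WittVector.verschiebung_coeff_succ]; exact ih (by omega)

lemma WVaux.iterate_verschiebung_add (i : ℕ) (x y : WittVector p R) :
    WittVector.verschiebung^[i] (x + y) =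
      WittVector.verschiebung^[i] x + WittVector.verschiebung^[i] y := by
  induction i with
  | zero => rfl
  | succ i ih =>
    rw [Function.iterate_succ_apply', Function.iterate_succ_apply',
      Function.iterate_succ_apply', ih, map_add]

noncomputable def WVaux.Vhom (p : ℕ) [Fact p.Prime] (R : Type*) [CommRing R] (i : ℕ) :
    WittVector p R →+ WittVector p R :=
  AddMonoidHom.mk' (WittVector.verschiebung^[i]) (WVaux.iterate_verschiebung_add i)

@[simp] lemma WVaux.Vhom_apply (i : ℕ) (x : WittVector p R) :
    WVaux.Vhom p R i x = WittVector.verschiebung^[i] x := rfl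

lemma WVaux.iterate_frobenius_coeff_zero [CharP R p] (x : WittVector p R) (i : ℕ) :
    (WittVector.frobenius^[i] x).coeff 0 = x.coeff 0 ^ p ^ i := by
  induction i with
  | zero => simp
  | succ i ih =>
    rw [Function.iterate_succ_apply', WittVector.coeff_frobenius_charP, ih, ← pow_mul, pow_succ]

lemma WVaux.map_truncate_comm (f : R →+* S) (n : ℕ) (x : WittVector p R) :
    TruncatedWittVector.map f (WittVector.truncate n x)
      = WittVector.truncate n (WittVector.map f x) := by
  ext j
  rw [TruncatedWittVector.coeff_map, WittVector.coeff_truncate, WittVector.coeff_truncate,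
    WittVector.map_coeff]

lemma WVaux.exists_gen {A B : Type*} [CommRing A] [CommRing B] (φ : A →+* B)
    (hφ : φ.Finite) : ∃ t : Finset B, ∀ b : B, ∃ c : B → A, ∑ g ∈ t, φ (c g) * g = b := by
  letI : Algebra A B := φ.toAlgebra
  haveI : Module.Finite A B := hφ
  obtain ⟨t, ht⟩ := Module.Finite.fg_top (R := A) (M := B)
  refine ⟨t, fun b => ?_⟩
  have hb : b ∈ Submodule.span A (↑t : Set B) := ht ▸ Submodule.mem_top
  obtain ⟨c, -, hc⟩ := Submodule.mem_span_finset.mp hb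
  refine ⟨c, ?_⟩
  rw [← hc]
  refine Finset.sum_congr rfl fun g _ => ?_
  rw [Algebra.smul_def, RingHom.algebraMap_toAlgebra]

end Aux

/-- Let `p` be a prime, `n ≥ 1`, and `f : A →+* B` a finite ring homomorphism between
Noetherian `F`-finite `𝔽_p`-algebras.  Then `Wₙ(f) : Wₙ(A) →+* Wₙ(B)` is finite. -/
theorem truncatedWittVector_map_finite (p n : ℕ) [Fact p.Prime] (hn : 1 ≤ n)
    (A B : Type*) [CommRing A] [CommRing B] [CharP A p] [CharP B p]
    [IsNoetherianRing A] [IsNoetherianRing B]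
    (hFA : (frobenius A p).Finite) (hFB : (frobenius B p).Finite)
    (f : A →+* B) (hf : f.Finite) :
    (TruncatedWittVector.map f :
        TruncatedWittVector p n A →+* TruncatedWittVector p n B).Finite := by
  classical
  letI : Algebra (TruncatedWittVector p n A) (TruncatedWittVector p n B) :=
    (TruncatedWittVector.map (p := p) (n := n) f).toAlgebra
  -- generators of B over A for each twisted module structure a • b = f a ^ p ^ i * b
  have hψ : ∀ i : ℕ, ∃ ψ : B →+* B, ψ.Finite ∧ ∀ b, ψ b = b ^ p ^ i := by
    intro i
    induction i with
    | zero => exact ⟨RingHom.id B, RingHom.Finite.id B, by simp⟩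
    | succ i ih =>
      obtain ⟨ψ, h1, h2⟩ := ih
      refine ⟨(frobenius B p).comp ψ, RingHom.Finite.comp hFB h1, fun b => ?_⟩
      simp only [RingHom.comp_apply, h2, frobenius_def, ← pow_mul, pow_succ]
  have hgen : ∀ i : ℕ, ∃ t : Finset B, ∀ b : B, ∃ c : B → A,
      ∑ g ∈ t, f (c g) ^ p ^ i * g = b := by
    intro i
    obtain ⟨ψ, h1, h2⟩ := hψ i
    obtain ⟨t, ht⟩ := WVaux.exists_gen (ψ.comp f) (h1.comp hf)
    refine ⟨t, fun b => ?_⟩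
    obtain ⟨c, hc⟩ := ht b
    exact ⟨c, by simpa only [RingHom.comp_apply, h2] using hc⟩
  choose t ht using hgen
  set S : Finset (TruncatedWittVector p n B) :=
    (Finset.range n).biUnion fun i => (t i).image fun g =>
      WittVector.truncate n (WittVector.verschiebung^[i] (WittVector.teichmuller p g)) with hS
  set M : Submodule (TruncatedWittVector p n A) (TruncatedWittVector p n B) :=
    Submodule.span (TruncatedWittVector p n A) (↑S : Set (TruncatedWittVector p n B)) with hM
  have key : ∀ k : ℕ, k ≤ n → ∀ x : TruncatedWittVector p n B,
      (∀ j : Fin n, (j : ℕ) < n - k → x.coeff j = 0) → x ∈ M := by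
    intro k
    induction k with
    | zero =>
      intro _ x hx
      have hx0 : x = 0 := by
        ext j
        rw [hx j (by omega), TruncatedWittVector.coeff_zero]
      rw [hx0]
      exact Submodule.zero_mem M
    | succ k ih =>
      intro hk x hx
      set i := n - (k + 1) with hi_def
      have hi : i < n := by omega
      -- x is a truncation of V^[i] z
      set z : WittVector p B :=
        WittVector.mk p (fun j => if h : j + i < n then x.coeff ⟨j + i, h⟩ else 0) with hz
      have hz_coeff : ∀ (j : ℕ) (h : j + i < n), z.coeff j = x.coeff ⟨j + i, h⟩ := by
        intro j h
        rw [hz, WittVector.coeff_mk]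
        exact dif_pos h
      have hxz : x = WittVector.truncate n (WittVector.verschiebung^[i] z) := by
        ext j
        rw [WittVector.coeff_truncate]
        rcases lt_or_ge (j : ℕ) i with h | h
        · rw [WVaux.iterate_verschiebung_coeff_lt _ h, hx j (by omega)]
        · obtain ⟨m, hm⟩ : ∃ m, (j : ℕ) = m + i := ⟨(j : ℕ) - i, by omega⟩
          have hmn : m + i < n := by omega
          have : (⟨m + i, hmn⟩ : Fin n) = j := by
            apply Fin.ext; simp [hm]
          rw [hm, WittVector.iterate_verschiebung_coeff, hz_coeff m hmn, this]
      obtain ⟨c, hc⟩ := ht i (x.coeff ⟨i, hi⟩)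
      set e' : WittVector p B := ∑ g ∈ t i,
        WittVector.map f (WittVector.teichmuller p (c g)) *
          WittVector.verschiebung^[i] (WittVector.teichmuller p g) with he'
      set u' : WittVector p B := ∑ g ∈ t i,
        WittVector.teichmuller p g *
          WittVector.frobenius^[i] (WittVector.map f (WittVector.teichmuller p (c g))) with hu'
      have he'u : e' = WittVector.verschiebung^[i] u' := by
        rw [he', hu']
        rw [show (WittVector.verschiebung^[i]
            (∑ g ∈ t i, WittVector.teichmuller p g *
              WittVector.frobenius^[i] (WittVector.map f (WittVector.teichmuller p (c g)))))
          = WVaux.Vhom p B i (∑ g ∈ t i, WittVector.teichmuller p g *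
              WittVector.frobenius^[i] (WittVector.map f (WittVector.teichmuller p (c g))))
          from rfl, map_sum]
        refine Finset.sum_congr rfl fun g _ => ?_
        rw [WVaux.Vhom_apply, mul_comm, WittVector.iterate_verschiebung_mul_left]
      -- the leading coefficient of z - u' vanishes
      have hw0 : (z - u').coeff 0 = 0 := by
        have h1 : (z - u').coeff 0 = z.coeff 0 - u'.coeff 0 := by
          have := map_sub (WittVector.constantCoeff (p := p) (R := B)) z u'
          simpa using this
        have h2 : z.coeff 0 = x.coeff ⟨i, hi⟩ := by
          have := hz_coeff 0 (by omega)
          simpa using this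
        have h3 : u'.coeff 0 = ∑ g ∈ t i, g * f (c g) ^ p ^ i := by
          have := map_sum (WittVector.constantCoeff (p := p) (R := B))
            (fun g => WittVector.teichmuller p g *
              WittVector.frobenius^[i] (WittVector.map f (WittVector.teichmuller p (c g)))) (t i)
          rw [hu']
          simp only [WittVector.constantCoeff_apply] at this
          rw [this]
          refine Finset.sum_congr rfl fun g _ => ?_
          rw [WittVector.mul_coeff_zero, WittVector.teichmuller_coeff_zero,
            WVaux.iterate_frobenius_coeff_zero, WittVector.map_coeff,
            WittVector.teichmuller_coeff_zero]
        rw [h1, h2, h3, ← hc]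
        rw [sub_eq_zero]
        exact Finset.sum_congr rfl fun g _ => mul_comm _ _
      -- x - truncate e' lies in M by induction
      have hdiff : x - WittVector.truncate n e'
          = WittVector.truncate n (WittVector.verschiebung^[i] (z - u')) := by
        rw [hxz, he'u, ← map_sub,
          show WittVector.verschiebung^[i] z - WittVector.verschiebung^[i] u'
            = WVaux.Vhom p B i z - WVaux.Vhom p B i u' from rfl, ← map_sub, WVaux.Vhom_apply]
      have hrem : x - WittVector.truncate n e' ∈ M := by
        refine ih (by omega) _ ?_
        intro j hj
        rw [hdiff, WittVector.coeff_truncate]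
        rcases (by omega : ((j : ℕ) < i ∨ (j : ℕ) = 0 + i)) with h | h
        · exact WVaux.iterate_verschiebung_coeff_lt _ h
        · rw [h, WittVector.iterate_verschiebung_coeff, hw0]
      have he_mem : WittVector.truncate n e' ∈ M := by
        rw [he', map_sum]
        refine Submodule.sum_mem M fun g hg => ?_
        rw [map_mul, ← WVaux.map_truncate_comm]
        have hsmul := Algebra.smul_def
          (WittVector.truncate n (WittVector.teichmuller p (c g)))
          (WittVector.truncate n (WittVector.verschiebung^[i] (WittVector.teichmuller p g)))
        rw [RingHom.algebraMap_toAlgebra] at hsmul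
        rw [← hsmul]
        refine Submodule.smul_mem M _ (Submodule.subset_span ?_)
        rw [Finset.mem_coe, hS, Finset.mem_biUnion]
        exact ⟨i, Finset.mem_range.mpr hi, Finset.mem_image.mpr ⟨g, hg, rfl⟩⟩
      have : x = WittVector.truncate n e' + (x - WittVector.truncate n e') := by ring
      rw [this]
      exact Submodule.add_mem M he_mem hrem
  have hspan : Submodule.span (TruncatedWittVector p n A)
      (↑S : Set (TruncatedWittVector p n B)) = ⊤ := by
    rw [eq_top_iff]
    intro x _
    exact key n le_rfl x (fun j hj => absurd hj (by omega))
  exact ⟨⟨S, hspan⟩⟩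
end

section
/- Let p be a prime, n ≥ 1, and let f : A → B be a ring homomorphism of finite type between Noetherian F-finite 𝔽_p-algebras. Then the induced ring homomorphism Wₙ(f) : Wₙ(A) → Wₙ(B) on n-truncated p-typical Witt vectors is of finite type. -/
open Function


/-! ### Thickening lemma -/

theorem ringHom_finiteType_of_sq_zero {R S : Type*} [CommRing R] [CommRing S]
    (g : R →+* S) (J : Ideal S)
    (hsq : ∀ x ∈ J, ∀ y ∈ J, x * y = 0) (hfg : J.FG)
    (hq : ((Ideal.Quotient.mk J).comp g).FiniteType) : g.FiniteType := by
  letI : Algebra R S := g.toAlgebra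
  letI : Algebra R (S ⧸ J) := ((Ideal.Quotient.mk J).comp g).toAlgebra
  classical
  have hq' : Algebra.FiniteType R (S ⧸ J) := hq
  obtain ⟨t, ht⟩ := hq'.out
  obtain ⟨G, hG⟩ := hfg
  let φ : S →ₐ[R] S ⧸ J := { toRingHom := Ideal.Quotient.mk J, commutes' := fun r => rfl }
  have hφsurj : Function.Surjective φ := Ideal.Quotient.mk_surjective
  let lif : (S ⧸ J) → S := fun y => (hφsurj y).choose
  have hlif : ∀ y, φ (lif y) = y := fun y => (hφsurj y).choose_spec
  set s : Finset S := t.image lif ∪ G with hs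
  set S₀ : Subalgebra R S := Algebra.adjoin R (↑s : Set S) with hS₀
  have himg : Algebra.adjoin R (↑t : Set (S ⧸ J)) ≤ S₀.map φ := by
    rw [hS₀, AlgHom.map_adjoin]
    apply Algebra.adjoin_mono
    intro y hy
    exact ⟨lif y, by
      simp only [hs, Finset.coe_union, Finset.coe_image, Set.mem_union]
      exact Or.inl ⟨y, hy, rfl⟩, hlif y⟩
  have hsurr : ∀ x : S, ∃ y ∈ S₀, x - y ∈ J := by
    intro x
    have hx : φ x ∈ S₀.map φ := himg (ht ▸ Algebra.mem_top)
    obtain ⟨y, hy, hyx⟩ := hx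
    exact ⟨y, hy, Ideal.Quotient.eq.mp hyx.symm⟩
  have hJS₀ : ∀ x ∈ J, x ∈ S₀ := by
    intro x hx
    rw [← hG] at hx
    refine Submodule.span_induction ?_ (zero_mem _) (fun a b _ _ ha hb => add_mem ha hb)
      ?_ hx
    · intro g hg
      exact Algebra.subset_adjoin (by
        simp only [hs, Finset.coe_union, Set.mem_union]
        exact Or.inr hg)
    · intro c x hxspan hxS₀
      obtain ⟨y, hy, hcy⟩ := hsurr c
      have hxJ : x ∈ J := hG ▸ hxspan
      have h0 : (c - y) * x = 0 := hsq _ hcy _ hxJ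
      have : c • x = y * x := by
        rw [smul_eq_mul, ← sub_eq_zero, ← sub_mul]
        exact h0
      rw [this]
      exact mul_mem hy hxS₀
  have htop : ∀ x : S, x ∈ S₀ := by
    intro x
    obtain ⟨y, hy, hxy⟩ := hsurr x
    have : x = y + (x - y) := by ring
    rw [this]
    exact add_mem hy (hJS₀ _ hxy)
  exact ⟨⟨s, le_antisymm le_top fun x _ => htop x⟩⟩

/-! ### generators from a finite ring hom -/

theorem exists_fin_gen {B C : Type*} [CommRing B] [CommRing C] (φ : B →+* C) (h : φ.Finite) :
    ∃ (k : ℕ) (g : Fin k → C), ∀ c : C, ∃ a : Fin k → B, c = ∑ i, φ (a i) * g i := by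
  letI : Algebra B C := φ.toAlgebra
  haveI : Module.Finite B C := h
  obtain ⟨k, g, hg⟩ := Module.Finite.exists_fin (R := B) (M := C)
  refine ⟨k, g, fun c => ?_⟩
  have hc : c ∈ Submodule.span B (Set.range g) := hg.symm ▸ Submodule.mem_top
  obtain ⟨a, ha⟩ := (Submodule.mem_span_range_iff_exists_fun B).mp hc
  refine ⟨a, ?_⟩
  rw [← ha]
  exact Finset.sum_congr rfl fun i _ => (Algebra.smul_def _ _)

theorem iterateFrobenius_finite {B : Type*} [CommRing B] (p : ℕ) [Fact p.Prime] [CharP B p]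
    (hF : (frobenius B p).Finite) (n : ℕ) : (iterateFrobenius B p n).Finite := by
  induction n with
  | zero => rw [iterateFrobenius_zero]; exact RingHom.Finite.id B
  | succ n ih =>
    have heq : iterateFrobenius B p (n + 1) = (iterateFrobenius B p n).comp (frobenius B p) := by
      refine RingHom.ext fun x => ?_
      rw [RingHom.comp_apply, iterateFrobenius_def, frobenius_def, iterateFrobenius_def,
        ← pow_mul, ← pow_succ']
    rw [heq]
    exact RingHom.Finite.comp ih hF

section WittAux

variable {p : ℕ} [hp : Fact p.Prime] {B : Type*} [CommRing B]

theorem iterate_verschiebung_coeff_lt (z : WittVector p B) {n j : ℕ} (h : j < n) :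
    (WittVector.verschiebung^[n] z).coeff j = 0 := by
  induction n generalizing j with
  | zero => omega
  | succ n ih =>
    rw [iterate_succ_apply']
    cases j with
    | zero => exact WittVector.verschiebung_coeff_zero _
    | succ j => rw [WittVector.verschiebung_coeff_succ]; exact ih (by omega)

/-- `(0, …, 0, b)` as an `(n+1)`-truncated Witt vector. -/
noncomputable def wdelta (n : ℕ) (b : B) : TruncatedWittVector p (n + 1) B :=
  WittVector.truncate (n + 1) (WittVector.verschiebung^[n] (WittVector.teichmuller p b))

theorem coeff_truncate_vn (n : ℕ) (z : WittVector p B) (i : Fin (n + 1)) :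
    (WittVector.truncate (n + 1) (WittVector.verschiebung^[n] z)).coeff i =
      if (i : ℕ) = n then z.coeff 0 else 0 := by
  rw [WittVector.coeff_truncate]
  split
  · next h =>
    rw [show ((i : ℕ)) = 0 + n by omega]
    exact WittVector.iterate_verschiebung_coeff z n 0
  · next h =>
    exact iterate_verschiebung_coeff_lt z (by omega : (i : ℕ) < n)

theorem coeff_wdelta (n : ℕ) (b : B) (i : Fin (n + 1)) :
    (wdelta (p := p) n b).coeff i = if (i : ℕ) = n then b else 0 := by
  rw [wdelta, coeff_truncate_vn, WittVector.teichmuller_coeff_zero]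

theorem truncate_vn_eq (n : ℕ) (z : WittVector p B) :
    WittVector.truncate (n + 1) (WittVector.verschiebung^[n] z) = wdelta n (z.coeff 0) :=
  TruncatedWittVector.ext fun i => by rw [coeff_truncate_vn, coeff_wdelta]

theorem wdelta_zero (n : ℕ) : wdelta (p := p) n (0 : B) = 0 :=
  TruncatedWittVector.ext fun i => by
    rw [coeff_wdelta, TruncatedWittVector.coeff_zero, ite_self]

theorem wdelta_add (n : ℕ) (b₁ b₂ : B) :
    wdelta (p := p) n (b₁ + b₂) = wdelta n b₁ + wdelta n b₂ := by
  have h : wdelta (p := p) n (b₁ + b₂) =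
      WittVector.truncate (n + 1) (WittVector.verschiebung^[n]
        (WittVector.teichmuller p b₁ + WittVector.teichmuller p b₂)) := by
    rw [truncate_vn_eq, WittVector.add_coeff_zero, WittVector.teichmuller_coeff_zero,
      WittVector.teichmuller_coeff_zero]
  rw [h, iterate_map_add, map_add, wdelta, wdelta]

theorem wdelta_sum (n : ℕ) {ι : Type*} (s : Finset ι) (f : ι → B) :
    wdelta (p := p) n (∑ i ∈ s, f i) = ∑ i ∈ s, wdelta n (f i) := by
  classical
  induction s using Finset.cons_induction with
  | empty => simp [wdelta_zero]
  | cons a s ha ih => rw [Finset.sum_cons, Finset.sum_cons, wdelta_add, ih]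

variable [CharP B p]

theorem mul_wdelta (n : ℕ) (x : TruncatedWittVector p (n + 1) B) (b : B) :
    x * wdelta n b = wdelta n (x.coeff 0 ^ p ^ n * b) := by
  have hx : WittVector.truncate (n + 1) x.out = x := TruncatedWittVector.truncateFun_out x
  have h := WittVector.iterate_verschiebung_mul x.out (WittVector.teichmuller p b) 0 n
  simp only [iterate_zero, id_eq, zero_add] at h
  rw [← hx, wdelta, ← map_mul, h, truncate_vn_eq, WittVector.mul_coeff_zero,
    WittVector.iterate_frobenius_coeff, WittVector.teichmuller_coeff_zero]
  have h0 := TruncatedWittVector.coeff_out x 0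
  rw [Fin.val_zero] at h0
  rw [h0, hx]

end WittAux

section W1

variable {p : ℕ} [hp : Fact p.Prime]

/-- `W₁(R) ≃+* R`. -/
noncomputable def w1Equiv (R : Type*) [CommRing R] : TruncatedWittVector p 1 R ≃+* R where
  toFun x := x.coeff 0
  invFun r := WittVector.truncate 1 (WittVector.teichmuller p r)
  left_inv x := TruncatedWittVector.ext fun i => by
    rw [Subsingleton.elim i 0, WittVector.coeff_truncate]
    rw [Fin.val_zero, WittVector.teichmuller_coeff_zero]
  right_inv r := by
    show TruncatedWittVector.coeff 0 ((WittVector.truncate 1) ((WittVector.teichmuller p) r)) = r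
    rw [WittVector.coeff_truncate, Fin.val_zero, WittVector.teichmuller_coeff_zero]
  map_mul' x y := by
    show TruncatedWittVector.coeff 0 (x * y)
      = TruncatedWittVector.coeff 0 x * TruncatedWittVector.coeff 0 y
    have hx : WittVector.truncate 1 x.out = x := TruncatedWittVector.truncateFun_out x
    have hy : WittVector.truncate 1 y.out = y := TruncatedWittVector.truncateFun_out y
    have hxo := TruncatedWittVector.coeff_out x 0
    have hyo := TruncatedWittVector.coeff_out y 0
    rw [Fin.val_zero] at hxo hyo
    rw [← hx, ← hy, ← map_mul, WittVector.coeff_truncate, Fin.val_zero,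
      WittVector.mul_coeff_zero, hx, hy, hxo, hyo]
  map_add' x y := by
    show TruncatedWittVector.coeff 0 (x + y)
      = TruncatedWittVector.coeff 0 x + TruncatedWittVector.coeff 0 y
    have hx : WittVector.truncate 1 x.out = x := TruncatedWittVector.truncateFun_out x
    have hy : WittVector.truncate 1 y.out = y := TruncatedWittVector.truncateFun_out y
    have hxo := TruncatedWittVector.coeff_out x 0
    have hyo := TruncatedWittVector.coeff_out y 0
    rw [Fin.val_zero] at hxo hyo
    rw [← hx, ← hy, ← map_add, WittVector.coeff_truncate, Fin.val_zero,
      WittVector.add_coeff_zero, hx, hy, hxo, hyo]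

end W1

section KerAux

variable {p n : ℕ} [hp : Fact p.Prime] {B : Type*} [CommRing B]

theorem mem_ker_truncate_succ (x : TruncatedWittVector p (n + 1) B) :
    x ∈ RingHom.ker (TruncatedWittVector.truncate (Nat.le_succ n) :
        TruncatedWittVector p (n + 1) B →+* TruncatedWittVector p n B) ↔
      ∀ i : Fin n, x.coeff (Fin.castLE (Nat.le_succ n) i) = 0 := by
  rw [RingHom.mem_ker]
  constructor
  · intro h i
    have h2 := congrArg (TruncatedWittVector.coeff i) h
    rw [TruncatedWittVector.coeff_truncate, TruncatedWittVector.coeff_zero] at h2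
    exact h2
  · intro h
    apply TruncatedWittVector.ext
    intro i
    rw [TruncatedWittVector.coeff_truncate, TruncatedWittVector.coeff_zero]
    exact h i

theorem eq_wdelta_of_coeff (x : TruncatedWittVector p (n + 1) B)
    (hx : ∀ i : Fin n, x.coeff (Fin.castLE (Nat.le_succ n) i) = 0) :
    x = wdelta n (x.coeff (Fin.last n)) := by
  apply TruncatedWittVector.ext
  intro i
  rw [coeff_wdelta]
  split
  · next h =>
    have hi : i = Fin.last n := Fin.ext (by simpa using h)
    rw [hi]
  · next h =>
    have hlt : (i : ℕ) < n := by omega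
    have h2 := hx ⟨(i : ℕ), hlt⟩
    have hc : Fin.castLE (Nat.le_succ n) (⟨(i : ℕ), hlt⟩ : Fin n) = i := Fin.ext rfl
    rwa [hc] at h2

end KerAux



/-- Let `p` be a prime, `n ≥ 1`, and `f : A →+* B` a ring homomorphism of finite type
between Noetherian `F`-finite `𝔽_p`-algebras.  Then `Wₙ(f) : Wₙ(A) →+* Wₙ(B)` is of
finite type. -/
theorem truncatedWittVector_map_finiteType (p n : ℕ) [Fact p.Prime] (hn : 1 ≤ n)
    (A B : Type*) [CommRing A] [CommRing B] [CharP A p] [CharP B p]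
    [IsNoetherianRing A] [IsNoetherianRing B]
    (hFA : (frobenius A p).Finite) (hFB : (frobenius B p).Finite)
    (f : A →+* B) (hf : f.FiniteType) :
    (TruncatedWittVector.map f :
        TruncatedWittVector p n A →+* TruncatedWittVector p n B).FiniteType := by
  have hp' : p.Prime := Fact.out
  induction n with
  | zero => omega
  | succ n ih =>
    rcases Nat.eq_zero_or_pos n with rfl | hpos
    · -- base case `n = 1`, via `W₁(R) ≃+* R`
      have hmap : (TruncatedWittVector.map f :
          TruncatedWittVector p 1 A →+* TruncatedWittVector p 1 B)
          = ((w1Equiv B).symm.toRingHom.comp f).comp (w1Equiv A).toRingHom := by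
        refine RingHom.ext fun x => TruncatedWittVector.ext fun i => ?_
        rw [Subsingleton.elim i 0, TruncatedWittVector.coeff_map]
        show f (x.coeff 0)
          = ((w1Equiv B).symm (f ((w1Equiv A) x))).coeff 0
        show f (x.coeff 0)
          = (WittVector.truncate 1 (WittVector.teichmuller p (f (x.coeff 0)))).coeff 0
        rw [WittVector.coeff_truncate, Fin.val_zero, WittVector.teichmuller_coeff_zero]
      rw [hmap]
      exact RingHom.FiniteType.comp
        (RingHom.FiniteType.comp
          (RingHom.FiniteType.of_surjective _ (w1Equiv B).symm.surjective) hf)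
        (RingHom.FiniteType.of_surjective _ (w1Equiv A).surjective)
    · -- inductive step
      have ih' := ih hpos
      set tB : TruncatedWittVector p (n + 1) B →+* TruncatedWittVector p n B :=
        TruncatedWittVector.truncate (Nat.le_succ n) with htB
      apply ringHom_finiteType_of_sq_zero _ (RingHom.ker tB)
      · -- the kernel is square-zero
        intro x hx y hy
        rw [eq_wdelta_of_coeff y ((mem_ker_truncate_succ y).mp hy), mul_wdelta]
        have hx0 : x.coeff 0 = 0 := by
          have h2 := (mem_ker_truncate_succ x).mp hx ⟨0, hpos⟩
          have hc : Fin.castLE (Nat.le_succ n) (⟨0, hpos⟩ : Fin n) = (0 : Fin (n + 1)) :=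
            Fin.ext rfl
          rwa [hc] at h2
        rw [hx0, zero_pow (pow_ne_zero n hp'.ne_zero), zero_mul, wdelta_zero]
      · -- the kernel is finitely generated
        classical
        obtain ⟨k, g, hg⟩ := exists_fin_gen _ (iterateFrobenius_finite p hFB n)
        refine ⟨Finset.image (fun i => wdelta (p := p) n (g i)) Finset.univ, ?_⟩
        rw [Finset.coe_image, Finset.coe_univ, Set.image_univ]
        apply le_antisymm
        · rw [Ideal.span_le]
          rintro _ ⟨i, rfl⟩
          show wdelta n (g i) ∈ RingHom.ker tB
          rw [mem_ker_truncate_succ]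
          intro j
          rw [coeff_wdelta]
          exact if_neg (by have := j.isLt; simp only [Fin.coe_castLE]; omega)
        · intro x hx
          rw [eq_wdelta_of_coeff x ((mem_ker_truncate_succ x).mp hx)]
          obtain ⟨a, ha⟩ := hg (x.coeff (Fin.last n))
          rw [ha, wdelta_sum]
          refine Submodule.sum_mem _ fun i _ => ?_
          have hyc : (WittVector.truncate (n + 1)
              (WittVector.teichmuller p (a i))).coeff 0 = a i := by
            rw [WittVector.coeff_truncate, Fin.val_zero, WittVector.teichmuller_coeff_zero]
          have hfrob : iterateFrobenius B p n (a i) = (a i) ^ p ^ n :=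
            iterateFrobenius_def p n (a i)
          rw [hfrob, ← hyc, ← mul_wdelta]
          exact Ideal.mul_mem_left _ _ (Ideal.subset_span ⟨i, rfl⟩)
      · -- the quotient is of finite type
        have hcomm : tB.comp (TruncatedWittVector.map f)
            = (TruncatedWittVector.map f).comp
                (TruncatedWittVector.truncate (Nat.le_succ n)) := by
          refine RingHom.ext fun x => TruncatedWittVector.ext fun i => ?_
          rw [RingHom.comp_apply, RingHom.comp_apply, htB,
            TruncatedWittVector.coeff_truncate, TruncatedWittVector.coeff_map,
            TruncatedWittVector.coeff_map, TruncatedWittVector.coeff_truncate]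
        have h2 : (tB.comp (TruncatedWittVector.map f)).FiniteType := by
          rw [hcomm]
          exact RingHom.FiniteType.comp ih'
            (RingHom.FiniteType.of_surjective _
              (TruncatedWittVector.truncate_surjective (Nat.le_succ n)))
        set e := RingHom.quotientKerEquivOfSurjective (f := tB)
          (htB ▸ TruncatedWittVector.truncate_surjective (Nat.le_succ n)) with he
        have hmk : (Ideal.Quotient.mk (RingHom.ker tB)).comp (TruncatedWittVector.map f)
            = e.symm.toRingHom.comp (tB.comp (TruncatedWittVector.map f)) := by
          refine RingHom.ext fun x => ?_
          apply e.injective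
          rw [RingHom.comp_apply, RingHom.comp_apply]
          simp only [RingEquiv.toRingHom_eq_coe, RingHom.coe_coe, RingEquiv.apply_symm_apply]
          exact RingHom.kerLift_mk tB _
        rw [hmk]
        exact RingHom.FiniteType.comp
          (RingHom.FiniteType.of_surjective _ e.symm.surjective) h2
end

section
/- Let p be a prime, n ≥ 1, R a commutative ring of characteristic p, and t ∈ R. Then the ring homomorphism Wₙ(R) → Wₙ(R[1/t]) induced by the localization map R → R[1/t] exhibits Wₙ(R[1/t]) as the localization of Wₙ(R) away from the Teichmüller lift [t]; that is, Wₙ(R[1/t]) together with this map satisfies the universal property of localization of Wₙ(R) at the multiplicative set of powers of [t]. -/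
namespace WittLocAux

open WittVector

variable {p : ℕ} [hp : Fact p.Prime]

private theorem teich_mul_aux₁ {R : Type*} [CommRing R] (a : R) (x : WittVector p R)
    (inj : Function.Injective (ghostMap : WittVector p R → ℕ → R)) :
    teichmuller p a * x = WittVector.mk p (fun i => a ^ p ^ i * x.coeff i) := by
  apply inj
  ext m
  rw [ghostMap_apply, ghostMap_apply, map_mul, ghostComponent_teichmuller,
    ghostComponent_apply, ghostComponent_apply, aeval_wittPolynomial, aeval_wittPolynomial,
    Finset.mul_sum]
  refine Finset.sum_congr rfl fun i hi => ?_
  have hi' : i + (m - i) = m := Nat.add_sub_cancel' (Nat.lt_succ_iff.mp (Finset.mem_range.mp hi))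
  simp only [coeff_mk, mul_pow, ← pow_mul, ← pow_add, hi']
  ring

theorem teichmuller_mul_coeff' {R : Type*} [CommRing R] (a : R) (x : WittVector p R) :
    teichmuller p a * x = WittVector.mk p (fun i => a ^ p ^ i * x.coeff i) := by
  let A : MvPolynomial (Option ℕ) ℤ := MvPolynomial.X none
  let X : WittVector p (MvPolynomial (Option ℕ) ℤ) :=
    WittVector.mk p fun i => MvPolynomial.X (some i)
  have key : teichmuller p A * X = WittVector.mk p (fun i => A ^ p ^ i * X.coeff i) := by
    refine map_injective (MvPolynomial.map (Int.castRingHom ℚ))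
      (MvPolynomial.map_injective _ Int.cast_injective) ?_
    rw [map_mul, map_teichmuller,
      teich_mul_aux₁ _ _ (ghostMap.bijective_of_invertible p _).1]
    ext i
    simp [map_coeff, coeff_mk]
  let f : MvPolynomial (Option ℕ) ℤ →+* R :=
    (MvPolynomial.aeval (fun o : Option ℕ => o.elim a x.coeff)).toRingHom
  have h2 : f A = a := by simp [f, A]
  have h3 : ∀ i, f (X.coeff i) = x.coeff i := by intro i; simp [f, X, coeff_mk]
  have h1 : WittVector.map f X = x := by ext i; rw [map_coeff, h3]
  have hmap := congrArg (WittVector.map f) key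
  rw [map_mul, map_teichmuller, h2, h1] at hmap
  rw [hmap]
  ext i
  simp only [map_coeff, coeff_mk, map_mul, map_pow, h2, h3]

theorem teichmuller_mul_coeff {R : Type*} [CommRing R] (a : R) (x : WittVector p R) (i : ℕ) :
    (teichmuller p a * x).coeff i = a ^ p ^ i * x.coeff i := by
  rw [teichmuller_mul_coeff', coeff_mk]

theorem trunc_teichmuller_mul_coeff {n : ℕ} {R : Type*} [CommRing R] (a : R)
    (x : TruncatedWittVector p n R) (i : Fin n) :
    (WittVector.truncate n (teichmuller p a) * x).coeff i = a ^ p ^ (i : ℕ) * x.coeff i := by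
  conv_lhs => rw [← TruncatedWittVector.truncate_out' x, ← map_mul]
  rw [WittVector.coeff_truncate, teichmuller_mul_coeff, TruncatedWittVector.coeff_out]

end WittLocAux

/-- Let `p` be a prime, `n ≥ 1`, `R` a commutative ring of characteristic `p` and
`t ∈ R`.  Then `Wₙ(R[1/t])`, via the map induced by the localization map
`R → R[1/t]`, is the localization of `Wₙ(R)` away from the Teichmüller lift `[t]`. -/
theorem truncatedWittVector_localization_away (p n : ℕ) [Fact p.Prime] (hn : 1 ≤ n)
    (R : Type*) [CommRing R] [CharP R p] (t : R) :
    @IsLocalization.Away (TruncatedWittVector p n R) _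
      (WittVector.truncate n (WittVector.teichmuller p t))
      (TruncatedWittVector p n (Localization.Away t)) _
      (TruncatedWittVector.map (algebraMap R (Localization.Away t))).toAlgebra := by
  have hppos : 0 < p := (‹Fact p.Prime›.out).pos
  letI : Algebra (TruncatedWittVector p n R) (TruncatedWittVector p n (Localization.Away t)) :=
    (TruncatedWittVector.map (algebraMap R (Localization.Away t))).toAlgebra
  set g : R →+* Localization.Away t := algebraMap R (Localization.Away t) with hg
  have hfτ : TruncatedWittVector.map (p := p) (n := n) g
      (WittVector.truncate n (WittVector.teichmuller p t))
        = WittVector.truncate n (WittVector.teichmuller p (g t)) := by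
    ext i
    rw [TruncatedWittVector.coeff_map, WittVector.coeff_truncate, WittVector.coeff_truncate,
      ← WittVector.map_coeff, WittVector.map_teichmuller]
  refine ⟨?_, ?_, ?_⟩
  · rintro ⟨_, k, rfl⟩
    rw [RingHom.algebraMap_toAlgebra, map_pow, hfτ]
    have hu : IsUnit (g t) := IsLocalization.Away.algebraMap_isUnit t
    exact (((hu.map (WittVector.teichmuller p)).map (WittVector.truncate n))).pow k
  · intro z
    have H : ∀ i : Fin n, ∃ (a : R) (k : ℕ), z.coeff i * g t ^ k = g a := by
      intro i
      obtain ⟨⟨a, ⟨c, k, rfl⟩⟩, h⟩ := IsLocalization.surj (Submonoid.powers t) (z.coeff i)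
      exact ⟨a, k, by rw [← map_pow]; exact h⟩
    choose a k hk using H
    set M := Finset.univ.sup k with hM
    have hki : ∀ i : Fin n, k i ≤ M * p ^ (i : ℕ) := fun i =>
      le_trans (Finset.le_sup (Finset.mem_univ i))
        (Nat.le_mul_of_pos_right M (pow_pos hppos _))
    refine ⟨⟨TruncatedWittVector.mk p (fun i => a i * t ^ (M * p ^ (i : ℕ) - k i)),
      ⟨_, M, rfl⟩⟩, ?_⟩
    rw [RingHom.algebraMap_toAlgebra]
    have hpow : TruncatedWittVector.map (p := p) (n := n) g
        ((WittVector.truncate n (WittVector.teichmuller p t)) ^ M)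
          = WittVector.truncate n (WittVector.teichmuller p ((g t) ^ M)) := by
      rw [map_pow, hfτ, MonoidHom.map_pow, map_pow]
    show z * TruncatedWittVector.map g _ = _
    rw [hpow]
    ext i
    rw [mul_comm, WittLocAux.trunc_teichmuller_mul_coeff, TruncatedWittVector.coeff_map,
      TruncatedWittVector.coeff_mk, map_mul, map_pow, ← hk i, ← pow_mul, mul_assoc,
      ← pow_add, Nat.add_sub_cancel' (hki i), mul_comm]
  · intro x y h
    rw [RingHom.algebraMap_toAlgebra] at h
    have H : ∀ i : Fin n, ∃ k : ℕ, t ^ k * x.coeff i = t ^ k * y.coeff i := by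
      intro i
      have hcoeff : g (x.coeff i) = g (y.coeff i) := by
        have := congrArg (fun z => TruncatedWittVector.coeff i z) h
        simpa only [TruncatedWittVector.coeff_map] using this
      obtain ⟨⟨c, k, rfl⟩, hc⟩ := IsLocalization.exists_of_eq (M := Submonoid.powers t) hcoeff
      exact ⟨k, hc⟩
    choose k hk using H
    set M := Finset.univ.sup k with hM
    have hki : ∀ i : Fin n, k i ≤ M * p ^ (i : ℕ) := fun i =>
      le_trans (Finset.le_sup (Finset.mem_univ i))
        (Nat.le_mul_of_pos_right M (pow_pos hppos _))
    refine ⟨⟨_, M, rfl⟩, ?_⟩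
    show (WittVector.truncate n (WittVector.teichmuller p t)) ^ M * x
        = (WittVector.truncate n (WittVector.teichmuller p t)) ^ M * y
    have hpM : (WittVector.truncate n (WittVector.teichmuller p t)) ^ M
        = WittVector.truncate n (WittVector.teichmuller p (t ^ M)) := by
      rw [MonoidHom.map_pow, map_pow]
    rw [hpM]
    ext i
    rw [WittLocAux.trunc_teichmuller_mul_coeff, WittLocAux.trunc_teichmuller_mul_coeff,
      ← pow_mul, ← Nat.sub_add_cancel (hki i), pow_add, mul_assoc, mul_assoc, hk i]
end

section
/- Let p be a prime, let 1 ≤ m ≤ n be integers, and let R be a commutative ring of characteristic p. If x ∈ Wₙ(R) maps to 0 under the truncation ring homomorphism Wₙ(R) → W_m(R) (equivalently, the first m Witt coordinates of x vanish), then there exists y ∈ Wₙ(R) with Fᵐ(x) = pᵐ · y, where F : Wₙ(R) → Wₙ(R) is the Witt vector Frobenius. In particular, the kernel of the induced surjection Wₙ(R)/pᵐWₙ(R) → W_m(R) is annihilated by Fᵐ. -/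
section aux

variable {p n : ℕ} [hp : Fact p.Prime] {R : Type*} [CommRing R] [CharP R p]

theorem map_frob_truncate (z : WittVector p R) :
    TruncatedWittVector.map (frobenius R p) (WittVector.truncate n z) =
      WittVector.truncate (p := p) n (WittVector.frobenius z) := by
  ext i
  rw [TruncatedWittVector.coeff_map, WittVector.coeff_truncate, WittVector.coeff_truncate,
    WittVector.coeff_frobenius_charP, frobenius_def]

theorem iterate_map_frob (k : ℕ) (z : WittVector p R) :
    (⇑(TruncatedWittVector.map (frobenius R p) :
        TruncatedWittVector p n R →+* TruncatedWittVector p n R))^[k]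
        (WittVector.truncate n z) =
      WittVector.truncate (p := p) n ((⇑(WittVector.frobenius :
        WittVector p R →+* WittVector p R))^[k] z) := by
  induction k generalizing z with
  | zero => simp
  | succ k ih =>
    rw [Function.iterate_succ_apply, Function.iterate_succ_apply, map_frob_truncate, ih]

theorem frob_iterate_p (k : ℕ) :
    (⇑(WittVector.frobenius : WittVector p R →+* WittVector p R))^[k]
      ((p : ℕ) : WittVector p R) = ((p : ℕ) : WittVector p R) := by
  induction k with
  | zero => rfl
  | succ k ihk => rw [Function.iterate_succ_apply, map_natCast, ihk]

theorem frob_iterate_versch (k : ℕ) (z : WittVector p R) :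
    (⇑(WittVector.frobenius : WittVector p R →+* WittVector p R))^[k]
        ((⇑(WittVector.verschiebung : WittVector p R →+ WittVector p R))^[k] z) =
      z * (p : WittVector p R) ^ k := by
  induction k generalizing z with
  | zero => simp
  | succ k ih =>
    rw [Function.iterate_succ_apply, Function.iterate_succ_apply',
      WittVector.frobenius_verschiebung, iterate_map_mul, ih]
    have hp := frob_iterate_p (R := R) (p := p) k
    push_cast at hp ⊢
    rw [hp, pow_succ, mul_assoc]

end aux

/-- Let `p` be a prime, `1 ≤ m ≤ n`, and `R` a commutative ring of characteristic `p`.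
If `x ∈ Wₙ(R)` maps to `0` under the truncation map `Wₙ(R) → W_m(R)`, then
`Fᵐ(x) = pᵐ • y` for some `y ∈ Wₙ(R)`, where `F` is the Witt vector Frobenius. -/
theorem frobenius_pow_of_truncate_eq_zero (p m n : ℕ) [Fact p.Prime]
    (hm : 1 ≤ m) (hmn : m ≤ n)
    (R : Type*) [CommRing R] [CharP R p]
    (x : TruncatedWittVector p n R)
    (hx : TruncatedWittVector.truncate hmn x = 0) :
    ∃ y : TruncatedWittVector p n R,
      (⇑(TruncatedWittVector.map (frobenius R p) :
          TruncatedWittVector p n R →+* TruncatedWittVector p n R))^[m] x =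
        (p : TruncatedWittVector p n R) ^ m * y := by
  have hcoeff : ∀ i < m, x.out.coeff i = 0 := by
    intro i hi
    have hin : i < n := lt_of_lt_of_le hi hmn
    have h1 := congrArg (TruncatedWittVector.coeff ⟨i, hi⟩) hx
    rw [TruncatedWittVector.coeff_truncate, TruncatedWittVector.coeff_zero] at h1
    rw [show x.out.coeff i = x.out.coeff (⟨i, hin⟩ : Fin n) from rfl,
      TruncatedWittVector.coeff_out]
    exact h1
  have hX := WittVector.eq_iterate_verschiebung hcoeff
  refine ⟨WittVector.truncate n (x.out.shift m), ?_⟩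
  conv_lhs => rw [← TruncatedWittVector.truncate_out' x, iterate_map_frob, hX, frob_iterate_versch, map_mul, map_pow, map_natCast, mul_comm]
end

section
/- Let p be a prime, r ≥ 1 an integer, q = p^r, let k be an algebraically closed field of characteristic p, and let V be a finite-dimensional k-vector space equipped with a bijective additive map κ : V → V satisfying κ(a^q • v) = a • κ(v) for all a ∈ k and v ∈ V (a bijective q^{-1}-linear operator). Then the additive map κ − 1 : V → V, v ↦ κ(v) − v, is surjective. -/
open Polynomial Finset

lemma coeff_one_pow_q (p r : ℕ) [Fact p.Prime] {k : Type*} [Field k] [CharP k p]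
    (hq : 2 ≤ p ^ r) (f : k[X]) : (f ^ (p ^ r)).coeff 1 = 0 := by
  rw [← Polynomial.map_iterateFrobenius_expand p f r, Polynomial.coeff_map,
    Polynomial.coeff_expand (by omega : 0 < p ^ r)]
  have : ¬ (p ^ r ∣ 1) := by intro h; have := Nat.le_of_dvd one_pos h; omega
  simp [this]

noncomputable def cartierAuxP (q : ℕ) {k : Type*} [Field k] (c : ℕ → k) : ℕ → Polynomial k
  | 0 => Polynomial.C 1 + Polynomial.C (c 0) * Polynomial.X ^ q
  | (i+1) => (cartierAuxP q c i) ^ q + Polynomial.C (c (i+1)) * Polynomial.X ^ q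

lemma cartierAuxP_coeff_one (p r : ℕ) [Fact p.Prime] {k : Type*} [Field k] [CharP k p]
    (hq : 2 ≤ p ^ r) (c : ℕ → k) (i : ℕ) : (cartierAuxP (p ^ r) c i).coeff 1 = 0 := by
  induction i with
  | zero =>
    simp [cartierAuxP, Polynomial.coeff_X_pow, Polynomial.coeff_one,
      (by omega : ¬ (1 = p ^ r))]
    intro h; rw [← h] at hq; norm_num at hq
  | succ i ih =>
    simp [cartierAuxP, coeff_one_pow_q p r hq, Polynomial.coeff_X_pow,
      (by omega : ¬ (1 = p ^ r))]

lemma exists_dep_aux {k V : Type*} [Field k] [AddCommGroup V] [Module k V] (u : ℕ → V) :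
    ∀ (n : ℕ) (cc : ℕ → k), (∑ i ∈ Finset.range n, cc i • u i = 0) → (∃ i < n, cc i ≠ 0) →
      ∃ m, ∃ c : ℕ → k, u m = ∑ i ∈ Finset.range m, c i • u i := by
  intro n
  induction n with
  | zero => rintro cc _ ⟨i, hi, _⟩; omega
  | succ n ih =>
    intro cc hsum hex
    by_cases hcn : cc n = 0
    · rw [Finset.sum_range_succ, hcn, zero_smul, add_zero] at hsum
      obtain ⟨i, hi, hne⟩ := hex
      have : i < n := by rcases Nat.lt_succ_iff_lt_or_eq.mp hi with h | h; · exact h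
                         · exact absurd (h ▸ hne) (by simp [hcn, h])
      exact ih cc hsum ⟨i, this, hne⟩
    · refine ⟨n, fun i => -(cc n)⁻¹ * cc i, ?_⟩
      rw [Finset.sum_range_succ] at hsum
      have h1 : cc n • u n = -∑ i ∈ Finset.range n, cc i • u i := by
        rw [eq_neg_iff_add_eq_zero, add_comm]; exact hsum
      have : u n = (cc n)⁻¹ • (cc n • u n) := by
        rw [smul_smul, inv_mul_cancel₀ hcn, one_smul]
      rw [this, h1, smul_neg, Finset.smul_sum, ← Finset.sum_neg_distrib]
      refine Finset.sum_congr rfl fun i _ => ?_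
      simp [smul_smul, neg_mul, neg_smul]

/-- Core lemma: for a `q`-semilinear additive map `g` on a finite-dimensional space,
`1 - g` is surjective. -/
lemma one_sub_semilinear_surj (p r : ℕ) [Fact p.Prime] (hr : 1 ≤ r)
    {k : Type*} [Field k] [CharP k p] [IsAlgClosed k]
    {V : Type*} [AddCommGroup V] [Module k V] [FiniteDimensional k V]
    (g : V →+ V) (hg : ∀ (a : k) (v : V), g (a • v) = a ^ (p ^ r) • g v) (w : V) :
    ∃ v, v - g v = w := by
  have hp2 : 2 ≤ p := (Fact.out : p.Prime).two_le
  have hq : 2 ≤ p ^ r :=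
    le_trans hp2 (Nat.le_self_pow (by omega) p |>.trans (Nat.pow_le_pow_right (by omega) hr))
  set q := p ^ r with hqdef
  set u : ℕ → V := fun i => (⇑g)^[i] w with hu
  have hu0 : u 0 = w := rfl
  have husucc : ∀ i, u (i + 1) = g (u i) := fun i => Function.iterate_succ_apply' _ _ _
  -- find a dependence relation
  obtain ⟨n, c, hrel⟩ : ∃ m, ∃ c : ℕ → k, u m = ∑ i ∈ Finset.range m, c i • u i := by
    set d := Module.finrank k V with hd
    have hnotli : ¬ LinearIndependent k (fun i : Fin (d + 1) => u i) := by
      intro h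
      have := h.fintype_card_le_finrank
      simp [hd] at this
    rw [Fintype.not_linearIndependent_iff] at hnotli
    obtain ⟨cf, hcsum, i0, hi0⟩ := hnotli
    set cc : ℕ → k := fun i => if h : i < d + 1 then cf ⟨i, h⟩ else 0 with hcc
    have hsum : ∑ i ∈ Finset.range (d + 1), cc i • u i = 0 := by
      rw [← Fin.sum_univ_eq_sum_range (fun i => cc i • u i) (d + 1)]
      rw [← hcsum]
      refine Finset.sum_congr rfl fun i _ => ?_
      simp [hcc, i.isLt, Fin.is_le i]
    exact exists_dep_aux u (d + 1) cc hsum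
      ⟨i0, i0.isLt, by simpa [hcc, i0.isLt, Fin.is_le i0] using hi0⟩
  rcases n with _ | m
  · -- w = 0
    simp only [Finset.range_zero, Finset.sum_empty] at hrel
    exact ⟨0, by rw [map_zero, sub_zero, ← hu0, hrel]⟩
  -- the polynomial equation
  set P : ℕ → Polynomial k := cartierAuxP q c with hP
  have hQcoeff : (P m - Polynomial.X).coeff 1 = -1 := by
    rw [Polynomial.coeff_sub, cartierAuxP_coeff_one p r hq c m, Polynomial.coeff_X_one]
    ring
  have hQdeg : (P m - Polynomial.X).degree ≠ 0 := by
    have hne : (P m - Polynomial.X) ≠ 0 := fun h => by simp [h] at hQcoeff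
    have h1 : 1 ≤ (P m - Polynomial.X).natDegree :=
      Polynomial.le_natDegree_of_ne_zero (by rw [hQcoeff]; norm_num)
    rw [Polynomial.degree_eq_natDegree hne]
    intro h
    have : (P m - Polynomial.X).natDegree = 0 := by exact_mod_cast h
    omega
  obtain ⟨s, hs⟩ := IsAlgClosed.exists_root _ hQdeg
  have hsroot : (P m).eval s = s := by
    have := hs
    rw [Polynomial.IsRoot, Polynomial.eval_sub, Polynomial.eval_X, sub_eq_zero] at this
    exact this
  set a : ℕ → k := fun i => (P i).eval s with ha
  have ha0 : a 0 = 1 + c 0 * s ^ q := by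
    simp [ha, hP, cartierAuxP]
  have hasucc : ∀ i, a (i + 1) = a i ^ q + c (i + 1) * s ^ q := by
    intro i; simp [ha, hP, cartierAuxP]
  have ham : a m = s := hsroot
  -- the candidate solution
  refine ⟨∑ i ∈ Finset.range (m + 1), a i • u i, ?_⟩
  have hgv : g (∑ i ∈ Finset.range (m + 1), a i • u i)
      = ∑ i ∈ Finset.range (m + 1), (a (i + 1) • u (i + 1) - (c (i + 1) * s ^ q) • u (i + 1)) := by
    rw [map_sum]
    refine Finset.sum_congr rfl fun i _ => ?_
    rw [hg, ← husucc, hasucc i, ← sub_smul]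
    ring_nf
  rw [hgv, Finset.sum_sub_distrib]
  have h1 : ∑ i ∈ Finset.range (m + 1), a i • u i - ∑ i ∈ Finset.range (m + 1), a (i + 1) • u (i + 1)
      = a 0 • u 0 - a (m + 1) • u (m + 1) := by
    rw [← Finset.sum_sub_distrib, Finset.sum_range_sub' (fun i => a i • u i)]
  have h2 : ∑ i ∈ Finset.range (m + 1), (c (i + 1) * s ^ q) • u (i + 1)
      = s ^ q • (u (m + 1) + c (m + 1) • u (m + 1) - c 0 • u 0) := by
    have hA := Finset.sum_range_succ' (fun i => c i • u i) (m + 1)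
    have hB := Finset.sum_range_succ (fun i => c i • u i) (m + 1)
    rw [hA, ← hrel] at hB
    -- hB : ∑ i ∈ range (m+1), c (i+1) • u (i+1) + c 0 • u 0 = u (m+1) + c (m+1) • u (m+1)
    have hS : ∑ i ∈ Finset.range (m + 1), c (i + 1) • u (i + 1)
        = u (m + 1) + c (m + 1) • u (m + 1) - c 0 • u 0 := by
      rw [← hB]; abel
    rw [← hS, Finset.smul_sum]
    refine Finset.sum_congr rfl fun i _ => ?_
    rw [smul_smul, mul_comm]
  have hsplit : ∀ A B C : V, A - (B - C) = (A - B) + C := fun A B C => by abel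
  rw [hsplit, h1, h2, ← hu0, ha0, show a (m + 1) = s ^ q + c (m + 1) * s ^ q by
    rw [hasucc, ham]]
  module



/-- Let `p` be a prime, `r ≥ 1`, `q = p ^ r`, `k` an algebraically closed field of
characteristic `p`, and `V` a finite-dimensional `k`-vector space with a bijective
additive map `κ : V → V` satisfying `κ (a ^ q • v) = a • κ v` (a bijective
`q⁻¹`-linear operator).  Then `κ - 1` is surjective. -/
theorem cartier_sub_one_surjective (p r : ℕ) [Fact p.Prime] (hr : 1 ≤ r)
    (k : Type*) [Field k] [CharP k p] [IsAlgClosed k]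
    (V : Type*) [AddCommGroup V] [Module k V] [FiniteDimensional k V]
    (κ : V →+ V) (hbij : Function.Bijective κ)
    (hκ : ∀ (a : k) (v : V), κ (a ^ (p ^ r) • v) = a • κ v) :
    Function.Surjective (fun v => κ v - v) := by
  set e : V ≃+ V := AddEquiv.ofBijective κ hbij with he
  have hek : ∀ v, e v = κ v := fun v => rfl
  set g : V →+ V := e.symm.toAddMonoidHom with hgdef
  have hκg : ∀ v, κ (g v) = v := fun v => by
    rw [hgdef, ← hek]; exact e.apply_symm_apply v
  have hg : ∀ (a : k) (v : V), g (a • v) = a ^ (p ^ r) • g v := by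
    intro a v
    apply hbij.injective
    rw [hκg, hκ, hκg]
  intro w
  obtain ⟨v, hv⟩ := one_sub_semilinear_surj p r hr g hg (g w)
  refine ⟨v, ?_⟩
  have : κ (v - g v) = κ (g w) := by rw [hv]
  rw [map_sub, hκg, hκg] at this
  simpa using this
end
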